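/- arXiv:2312.10154 — 9 statements merged into one kernel-verified Lean document; each statement's English description precedes it below -/
import Mathlib

section
/- For any graph G on n vertices, Z⁺₍ℓ₎(G) = n if and only if the maximum degree of G satisfies Δ(G) ≤ ℓ. -/
open SimpleGraph Set

variable {V : Type*}

/-- `w'` lies in the same connected component of `G - B` as `w` (both non-blue). -/
def SameComp (G : SimpleGraph V) (B : Set V) (w w' : V) : Prop :=
  ∃ (hw : w ∈ Bᶜ) (hw' : w' ∈ Bᶜ), (G.induce Bᶜ).Reachable ⟨w, hw⟩ ⟨w', hw'⟩

/-- With blue set `B` and leak set `L`, the blue non-leak vertex `u` can psd-force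
`w`, i.e. `w` is the unique non-blue neighbor of `u` in the component of `G - B`
containing `w` (together with `B`). -/
def PsdForce (G : SimpleGraph V) (L B : Set V) (u w : V) : Prop :=
  u ∈ B ∧ u ∉ L ∧ w ∉ B ∧ G.Adj u w ∧
    ∀ w', G.Adj u w' → SameComp G B w w' → w' = w

/-- Iterative application of the psd color change rule with leaks `L`. -/
inductive PsdDeriv (G : SimpleGraph V) (L : Set V) : Set V → Set V → Prop
  | refl (B : Set V) : PsdDeriv G L B B
  | step {B C : Set V} {u w : V} : PsdDeriv G L B C → PsdForce G L C u w →
      PsdDeriv G L B (insert w C)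

/-- `B` is an `ℓ`-leaky positive semidefinite forcing set of `G`. -/
def IsLeakyPsdForcingSet (G : SimpleGraph V) (ℓ : ℕ) (B : Set V) : Prop :=
  ∀ L : Set V, L.Finite → L.ncard ≤ ℓ → PsdDeriv G L B Set.univ

/-- The `ℓ`-leaky positive semidefinite forcing number of `G`. -/
noncomputable def leakyPsdNum [Fintype V] (G : SimpleGraph V) (ℓ : ℕ) : ℕ :=
  sInf {k | ∃ B : Set V, B.ncard = k ∧ IsLeakyPsdForcingSet G ℓ B}

/-- `Z⁺₍ℓ₎(G) = n` iff `Δ(G) ≤ ℓ`. -/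
theorem leakyPsdNum_eq_card_iff [Fintype V] (G : SimpleGraph V) (ℓ : ℕ) :
    leakyPsdNum G ℓ = Fintype.card V ↔ ∀ v : V, (G.neighborSet v).ncard ≤ ℓ := by
  classical
  have huniv : (Fintype.card V) ∈
      {k | ∃ B : Set V, B.ncard = k ∧ IsLeakyPsdForcingSet G ℓ B} :=
    ⟨Set.univ, by rw [Set.ncard_univ, Nat.card_eq_fintype_card], fun L _ _ => PsdDeriv.refl _⟩
  constructor
  · intro h v
    by_contra hv
    push_neg at hv
    -- B = {v}ᶜ is a forcing set of smaller size
    set B : Set V := {v}ᶜ with hB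
    have hforce : IsLeakyPsdForcingSet G ℓ B := by
      intro L hLfin hLcard
      -- find a neighbor of v not in L
      have : ¬ (G.neighborSet v ⊆ L) := by
        intro hsub
        exact absurd (le_trans (Set.ncard_le_ncard hsub hLfin) hLcard)
          (not_le.mpr hv)
      obtain ⟨u, hu, huL⟩ := Set.not_subset.mp this
      have hAdj : G.Adj u v := (G.mem_neighborSet u v).mp (G.adj_symm hu)
      have huv : u ≠ v := G.ne_of_adj hAdj
      have hstep : PsdForce G L B u v := by
        refine ⟨huv, huL, by simp [hB], hAdj, ?_⟩
        intro w' _ hsc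
        obtain ⟨_, hw', _⟩ := hsc
        simpa [hB] using hw'
      have h2 := PsdDeriv.step (PsdDeriv.refl B) hstep
      have : insert v B = Set.univ := by
        rw [hB, Set.insert_eq, Set.union_compl_self]
      rwa [this] at h2
    have hmem : B.ncard ∈
        {k | ∃ B : Set V, B.ncard = k ∧ IsLeakyPsdForcingSet G ℓ B} :=
      ⟨B, rfl, hforce⟩
    have hlt : B.ncard < Fintype.card V := by
      rw [← Nat.card_eq_fintype_card, ← Set.ncard_univ V]
      exact Set.ncard_lt_ncard (by rw [hB]; exact Set.ssubset_univ_iff.mpr (fun hc => by simpa using Set.ext_iff.mp hc v)) Set.finite_univ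
    have h3 := Nat.sInf_le hmem
    rw [leakyPsdNum] at h
    omega
  · intro hdeg
    -- every forcing set is univ
    have key : ∀ k ∈ {k | ∃ B : Set V, B.ncard = k ∧ IsLeakyPsdForcingSet G ℓ B},
        k = Fintype.card V := by
      rintro k ⟨B, rfl, hB⟩
      have hBuniv : B = Set.univ := by
        by_contra hne
        obtain ⟨w, -, hw⟩ := Set.exists_of_ssubset
          (Set.ssubset_univ_iff.mpr hne)
        have hd := hB (G.neighborSet w) (Set.toFinite _) (hdeg w)
        have blocked : ∀ C D : Set V, PsdDeriv G (G.neighborSet w) C D →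
            w ∉ C → w ∉ D := by
          intro C D h
          induction h with
          | refl => exact fun h => h
          | step _ hf ih =>
            intro hC hmem
            rcases hmem with h | h
            · subst h
              exact hf.2.1 ((G.mem_neighborSet w _).mpr (G.adj_symm hf.2.2.2.1))
            · exact ih hC h
        exact blocked B Set.univ hd hw (Set.mem_univ w)
      rw [hBuniv, Set.ncard_univ, Nat.card_eq_fintype_card]
    have h1 := Nat.sInf_le huniv
    have h2 := key _ (Nat.sInf_mem ⟨_, huniv⟩)
    rw [leakyPsdNum]
    omega
end

section
/- If B is an ℓ-leaky positive semidefinite forcing set of a graph G, then for every vertex v ∈ V(G) \ B, there exist ℓ+1 pairwise distinct vertices x₁,…,x_{ℓ+1} such that the force xᵢ → v belongs to the set of all possible psd forces starting from B, for each i. -/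
open SimpleGraph Set

variable {V : Type*}

/-- A chronological list of psd forces (no leaks) transforming blue set `B`
into blue set `C`. -/
inductive PsdChron (G : SimpleGraph V) : Set V → List (V × V) → Set V → Prop
  | nil (B : Set V) : PsdChron G B [] B
  | cons {B C : Set V} {l : List (V × V)} {u w : V} :
      PsdForce G ∅ B u w → PsdChron G (insert w B) l C →
      PsdChron G B ((u, w) :: l) C

/-- `𝓕⁺(B)`: the set of all psd forces `u → v` appearing in some set of psd
forces that starts with `B` and colors the whole graph blue. -/
def allPsdForces (G : SimpleGraph V) (B : Set V) : Set (V × V) :=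
  {p | ∃ l : List (V × V), PsdChron G B l Set.univ ∧ p ∈ l}

lemma PsdForce.noLeak {G : SimpleGraph V} {L B : Set V} {u w : V}
    (h : PsdForce G L B u w) : PsdForce G ∅ B u w :=
  ⟨h.1, by simp, h.2.2⟩

lemma PsdChron.append {G : SimpleGraph V} {B C : Set V} {l : List (V × V)} {u w : V}
    (h : PsdChron G B l C) (hf : PsdForce G ∅ C u w) :
    PsdChron G B (l ++ [(u, w)]) (insert w C) := by
  induction h with
  | nil B => exact PsdChron.cons hf (PsdChron.nil _)
  | cons hf' _ ih => exact PsdChron.cons hf' (ih hf)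

lemma PsdDeriv.toChron {G : SimpleGraph V} {L B C : Set V}
    (h : PsdDeriv G L B C) :
    ∃ l : List (V × V), PsdChron G B l C ∧ ∀ p ∈ l, p.1 ∉ L := by
  induction h with
  | refl => exact ⟨[], PsdChron.nil _, by simp⟩
  | step _ hf ih =>
    obtain ⟨l, hl, hL⟩ := ih
    refine ⟨l ++ [(_, _)], hl.append hf.noLeak, ?_⟩
    intro p hp
    rcases List.mem_append.mp hp with h1 | h2
    · exact hL p h1
    · simp at h2; subst h2; exact hf.2.1

lemma PsdChron.exists_forcer {G : SimpleGraph V} {B C : Set V} {l : List (V × V)}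
    (h : PsdChron G B l C) : ∀ v ∈ C, v ∉ B → ∃ u, (u, v) ∈ l := by
  induction h with
  | nil B => intro v hv hv'; exact absurd hv hv'
  | @cons B C l u w hf _ ih =>
    intro v hv hv'
    by_cases hvw : v = w
    · exact ⟨u, by simp [hvw]⟩
    · obtain ⟨u', hu'⟩ := ih v hv (by simp [hvw, hv'])
      exact ⟨u', List.mem_cons_of_mem _ hu'⟩

/-- if `B` is an `ℓ`-leaky psd forcing set, each `v ∉ B` can be
forced in `ℓ + 1` distinct ways. -/
theorem exists_distinct_forcers [Fintype V] (G : SimpleGraph V) (ℓ : ℕ) (B : Set V)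
    (hB : IsLeakyPsdForcingSet G ℓ B) :
    ∀ v ∉ B, ∃ xs : Finset V, xs.card = ℓ + 1 ∧
      ∀ x ∈ xs, (x, v) ∈ allPsdForces G B := by
  intro v hv
  set S : Set V := {u | (u, v) ∈ allPsdForces G B} with hS
  have hfin : S.Finite := Set.toFinite _
  have hcard : ℓ + 1 ≤ S.ncard := by
    by_contra hlt
    push_neg at hlt
    have hderiv := hB S hfin (Nat.lt_succ_iff.mp hlt)
    obtain ⟨l, hl, hL⟩ := hderiv.toChron
    obtain ⟨u, hu⟩ := hl.exists_forcer v (Set.mem_univ v) hv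
    exact hL _ hu ⟨l, hl, hu⟩
  have hcard' : ℓ + 1 ≤ hfin.toFinset.card := by
    rwa [Set.ncard_eq_toFinset_card _ hfin] at hcard
  obtain ⟨t, ht, htc⟩ := Finset.exists_subset_card_eq hcard'
  exact ⟨t, htc, fun x hx => hfin.mem_toFinset.mp (ht hx)⟩
end

section
/- A set B ⊆ V(G) is a 1-leaky positive semidefinite forcing set if and only if for every vertex v ∈ V(G) \ B there exist two distinct vertices x ≠ y with both forces x → v and y → v in the set 𝓕⁺(B) of all possible psd forces starting with B. -/
open SimpleGraph Set

variable {V : Type*}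

/-! ### Auxiliary lemmas -/

section Aux

variable {G : SimpleGraph V} {B B' C D : Set V} {u w : V}

lemma sameComp_refl {w : V} (hw : w ∈ Bᶜ) : SameComp G B w w := ⟨hw, hw, Reachable.refl _⟩

lemma sameComp_symm {a b : V} (h : SameComp G B a b) : SameComp G B b a := by
  obtain ⟨ha, hb, hr⟩ := h
  exact ⟨hb, ha, hr.symm⟩

lemma sameComp_trans {a b c : V} (h1 : SameComp G B a b) (h2 : SameComp G B b c) :
    SameComp G B a c := by
  obtain ⟨ha, hb, hr⟩ := h1
  obtain ⟨hb', hc, hr'⟩ := h2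
  exact ⟨ha, hc, hr.trans hr'⟩

lemma sameComp_of_adj {a b : V} (ha : a ∈ Bᶜ) (hb : b ∈ Bᶜ) (hadj : G.Adj a b) :
    SameComp G B a b :=
  ⟨ha, hb, Adj.reachable (by exact hadj)⟩

lemma sameComp_mono {a b : V} (hBB : B ⊆ B') (h : SameComp G B' a b) : SameComp G B a b := by
  obtain ⟨ha, hb, hr⟩ := h
  have hsub : B'ᶜ ⊆ Bᶜ := compl_subset_compl.mpr hBB
  let f : G.induce B'ᶜ →g G.induce Bᶜ := ⟨fun x => ⟨x.1, hsub x.2⟩, fun {c d} h => h⟩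
  exact ⟨hsub ha, hsub hb, hr.map f⟩

lemma psdForce_empty {L : Set V} (h : PsdForce G L B u w) : PsdForce G ∅ B u w :=
  ⟨h.1, Set.notMem_empty u, h.2.2.1, h.2.2.2.1, h.2.2.2.2⟩

lemma psdForce_leak {L : Set V} (h : PsdForce G ∅ B u w) (hu : u ∉ L) : PsdForce G L B u w :=
  ⟨h.1, hu, h.2.2.1, h.2.2.2.1, h.2.2.2.2⟩

lemma psdForce_mono (h : PsdForce G ∅ B u w) (hBB : B ⊆ B') (hw : w ∉ B') :
    PsdForce G ∅ B' u w :=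
  ⟨hBB h.1, Set.notMem_empty u, hw, h.2.2.2.1,
    fun w' hadj hsc => h.2.2.2.2 w' hadj (sameComp_mono hBB hsc)⟩

lemma deriv_trans {L A : Set V} (h1 : PsdDeriv G L A B) (h2 : PsdDeriv G L B C) :
    PsdDeriv G L A C := by
  induction h2 with
  | refl => exact h1
  | step hd hf ih => exact .step ih hf

lemma chron_subset {l : List (V × V)} (h : PsdChron G B l C) : B ⊆ C := by
  induction h with
  | nil => exact subset_rfl
  | cons hf hc ih => exact (subset_insert _ _).trans ih

lemma chron_target_not_mem {l : List (V × V)} (h : PsdChron G B l C) :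
    ∀ p ∈ l, p.2 ∉ B := by
  induction h with
  | nil => simp
  | @cons B C l u w hf hc ih =>
    intro p hp
    rcases List.mem_cons.mp hp with rfl | hp'
    · exact hf.2.2.1
    · exact fun hB => ih p hp' (mem_insert_of_mem _ hB)

lemma chron_append {l : List (V × V)} (h : PsdChron G B l C) (hf : PsdForce G ∅ C u w) :
    PsdChron G B (l ++ [(u, w)]) (insert w C) := by
  induction h with
  | nil => exact .cons hf (.nil _)
  | cons hf' hc ih => exact .cons hf' (ih hf)

lemma derivToChron {L : Set V} (h : PsdDeriv G L B C) :
    ∃ l, PsdChron G B l C ∧ ∀ p ∈ l, p.1 ∉ L := by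
  induction h with
  | refl => exact ⟨[], .nil _, by simp⟩
  | @step C u w hd hf ih =>
    obtain ⟨l, hl, hl2⟩ := ih
    refine ⟨l ++ [(u, w)], chron_append hl (psdForce_empty hf), ?_⟩
    intro p hp
    rcases List.mem_append.mp hp with hp' | hp'
    · exact hl2 p hp'
    · simp only [List.mem_singleton] at hp'
      subst hp'
      exact hf.2.1

lemma chronToDeriv {L : Set V} {l : List (V × V)} (h : PsdChron G B l C) :
    (∀ p ∈ l, p.1 ∉ L) → PsdDeriv G L B C := by
  induction h with
  | nil => exact fun _ => .refl _
  | @cons B C l u w hf hc ih =>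
    intro hl
    have h1 : PsdForce G L B u w := psdForce_leak hf (hl (u, w) (by simp))
    exact deriv_trans (.step (.refl _) h1) (ih fun p hp => hl p (List.mem_cons_of_mem _ hp))

lemma chron_exists_force {l : List (V × V)} (h : PsdChron G B l C) :
    ∀ {v : V}, v ∈ C → v ∉ B → ∃ u, (u, v) ∈ l := by
  induction h with
  | nil => exact fun h1 h2 => absurd h1 h2
  | @cons B C l u w hf hc ih =>
    intro v h1 h2
    by_cases hv : v = w
    · exact ⟨u, by simp [hv]⟩
    · obtain ⟨u', hm⟩ := ih h1 (by simp [Set.mem_insert_iff, hv, h2])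
      exact ⟨u', List.mem_cons_of_mem _ hm⟩

lemma chron_mem_to_stage {l : List (V × V)} (h : PsdChron G B l C) :
    ∀ {u v : V}, (u, v) ∈ l → ∃ D, PsdDeriv G ∅ B D ∧ PsdForce G ∅ D u v := by
  induction h with
  | nil => simp
  | @cons B C l u w hf hc ih =>
    intro a b hm
    rcases List.mem_cons.mp hm with he | ht
    · simp only [Prod.mk.injEq] at he
      obtain ⟨rfl, rfl⟩ := he
      exact ⟨B, .refl B, hf⟩
    · obtain ⟨D, hD, hfD⟩ := ih ht
      exact ⟨D, deriv_trans (.step (.refl _) hf) hD, hfD⟩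

/-- Replaying a chronology from a larger starting blue set. -/
lemma psdChron_replay {l : List (V × V)} (h : PsdChron G B l C) :
    ∀ B', B ⊆ B' → ∃ l', PsdChron G B' l' (B' ∪ C) ∧
      (∀ p ∈ l', p ∈ l) ∧ (∀ p ∈ l, p.2 ∉ B' → p ∈ l') := by
  induction h with
  | nil B =>
    intro B' hBB'
    refine ⟨[], ?_, by simp, by simp⟩
    have : B' ∪ B = B' := Set.union_eq_left.mpr hBB'
    rw [this]
    exact .nil _
  | @cons B C l u w hf hc ih =>
    intro B' hBB'
    by_cases hw : w ∈ B'
    · have hsub : insert w B ⊆ B' := Set.insert_subset hw hBB'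
      obtain ⟨l', h1, h2, h3⟩ := ih B' hsub
      refine ⟨l', h1, fun p hp => List.mem_cons_of_mem _ (h2 p hp), ?_⟩
      intro p hp hpB'
      rcases List.mem_cons.mp hp with rfl | hp'
      · exact absurd hw hpB'
      · exact h3 p hp' hpB'
    · have hf' : PsdForce G ∅ B' u w := psdForce_mono hf hBB' hw
      obtain ⟨l', h1, h2, h3⟩ := ih (insert w B') (Set.insert_subset_insert hBB')
      have hwC : w ∈ C := chron_subset hc (mem_insert w B)
      have heq : insert w B' ∪ C = B' ∪ C := by
        rw [Set.insert_union, Set.insert_eq_of_mem (Set.mem_union_right _ hwC)]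
      rw [heq] at h1
      refine ⟨(u, w) :: l', .cons hf' h1, ?_, ?_⟩
      · intro p hp
        rcases List.mem_cons.mp hp with rfl | hp'
        · exact List.mem_cons_self
        · exact List.mem_cons_of_mem _ (h2 p hp')
      · intro p hp hpB'
        rcases List.mem_cons.mp hp with rfl | hp'
        · exact List.mem_cons_self
        · have hpw : p.2 ∉ insert w B := chron_target_not_mem hc p hp'
          have : p.2 ∉ insert w B' := by
            simp only [Set.mem_insert_iff] at hpw ⊢
            push_neg at hpw ⊢
            exact ⟨hpw.1, hpB'⟩
          exact List.mem_cons_of_mem _ (h3 p hp' this)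

lemma deriv_first_force (h : PsdDeriv G ∅ B C) :
    B = C ∨ ∃ u w, PsdForce G ∅ B u w := by
  induction h with
  | refl => exact Or.inl rfl
  | @step C u w hd hf ih =>
    rcases ih with rfl | h'
    · exact Or.inr ⟨u, w, hf⟩
    · exact Or.inr h'

/-- Walks in an induced subgraph can be restricted to a smaller vertex set, provided
every vertex reachable from the start lies in the smaller set. -/
lemma reachable_avoid {s s' : Set V} :
    ∀ {a b : ↥s} (_ : (G.induce s).Walk a b)
      (_ : ∀ c : ↥s, (G.induce s).Reachable a c → (c : V) ∈ s')
      (ha : (a : V) ∈ s') (hb : (b : V) ∈ s'),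
      (G.induce s').Reachable ⟨a, ha⟩ ⟨b, hb⟩ := by
  intro a b p
  induction p with
  | nil => exact fun _ ha hb => Reachable.refl _
  | @cons x m y h q ih =>
    intro hall ha hb
    have hxm : (G.induce s).Reachable x m := Adj.reachable h
    have hm : (m : V) ∈ s' := hall m hxm
    have hadj : (G.induce s').Adj ⟨(x : V), ha⟩ ⟨(m : V), hm⟩ := h
    exact (Adj.reachable hadj).trans (ih (fun c hc => hall c (hxm.trans hc)) hm hb)

/-- If `z` and `z'` lie in the same component of `G - D`, which does not contain `t`
(witnessed via `w`), then they are still in the same component of `G - (D ∪ {t})`. -/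
lemma sameComp_insert {t z z' w : V} {D : Set V}
    (h : SameComp G D z z') (hzw : SameComp G D z w) (htw : ¬ SameComp G D t w) :
    SameComp G (insert t D) z z' := by
  obtain ⟨hz, hz', hr⟩ := h
  have key : ∀ c : ↥(Dᶜ), (G.induce Dᶜ).Reachable ⟨z, hz⟩ c → (c : V) ∈ (insert t D)ᶜ := by
    intro c hc
    have hzc : SameComp G D z (c : V) := ⟨hz, c.2, hc⟩
    simp only [Set.mem_compl_iff, Set.mem_insert_iff, not_or]
    refine ⟨fun hct => htw ?_, c.2⟩
    exact sameComp_trans (sameComp_symm (hct ▸ hzc)) hzw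
  obtain ⟨p⟩ := hr
  have hz1 : z ∈ (insert t D)ᶜ := key ⟨z, hz⟩ (Reachable.refl _)
  have hz2 : z' ∈ (insert t D)ᶜ := key ⟨z', hz'⟩ ⟨p⟩
  exact ⟨hz1, hz2, reachable_avoid p key hz1 hz2⟩

/-- The key exchange lemma: if at `C` every valid force is performed by `ℓ`,
`ℓ` can force `w` at `C`, and after some further (leakless) forcing `y` can force `w`,
then `y = ℓ`. -/
lemma claimD {ℓ w y : V} (hstall : ∀ u z, PsdForce G ∅ C u z → u = ℓ)
    (hw : PsdForce G ∅ C ℓ w) (hd : PsdDeriv G ∅ C D) (hy : PsdForce G ∅ D y w) :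
    y = ℓ := by
  have key : ∀ {D : Set V}, PsdDeriv G ∅ C D → w ∉ D →
      C ⊆ D ∧ ∀ u z, u ≠ ℓ → PsdForce G ∅ D u z → ¬ SameComp G D z w := by
    intro D hd
    induction hd with
    | refl =>
      intro _
      refine ⟨subset_rfl, fun u z hu hforce _ => hu (hstall u z hforce)⟩
    | @step D₀ p t hd₀ hf ih =>
      intro hwn
      have hwD : w ∉ D₀ := fun h => hwn (mem_insert_of_mem _ h)
      have htwne : t ≠ w := fun h => hwn (h ▸ mem_insert _ _)
      obtain ⟨hCD, hP⟩ := ih hwD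
      have hntw : ¬ SameComp G D₀ t w := by
        intro hsc
        have hp : p = ℓ := by
          by_contra hne
          exact hP p t hne hf hsc
        subst hp
        exact htwne (hw.2.2.2.2 t hf.2.2.2.1 (sameComp_mono hCD (sameComp_symm hsc)))
      refine ⟨hCD.trans (subset_insert _ _), ?_⟩
      intro u z hu hforce hsc'
      have hzD' : z ∉ insert t D₀ := hforce.2.2.1
      have hzD : z ∉ D₀ := fun h => hzD' (mem_insert_of_mem _ h)
      have hsczw : SameComp G D₀ z w := sameComp_mono (subset_insert t D₀) hsc'
      rcases Set.mem_insert_iff.mp hforce.1 with rfl | hu_D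
      · -- the forcer is the newly blued vertex `t`
        have htz : SameComp G D₀ u z :=
          sameComp_of_adj hf.2.2.1 hzD hforce.2.2.2.1
        exact hntw (sameComp_trans htz hsczw)
      · -- the forcer was already blue at `D₀`
        refine hP u z hu ⟨hu_D, Set.notMem_empty u, hzD, hforce.2.2.2.1, ?_⟩ hsczw
        intro z' hadj hsc2
        have hz'D : z' ∉ D₀ := by
          obtain ⟨_, hz', _⟩ := hsc2
          exact hz'
        have hlift : SameComp G (insert t D₀) z z' := sameComp_insert hsc2 hsczw hntw
        exact hforce.2.2.2.2 z' hadj hlift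
  have hwD : w ∉ D := hy.2.2.1
  obtain ⟨_, hP⟩ := key hd hwD
  by_contra hne
  exact hP y w hne hy (sameComp_refl hwD)

/-- Main lemma for the sufficiency direction: with a single leak `ℓ`, a set `B`
all of whose missing vertices have two possible forcers still forces everything. -/
lemma mainLemma [Fintype V] (G : SimpleGraph V) (ℓ : V) :
    ∀ (n : ℕ) (B : Set V), (Bᶜ).ncard = n →
      (∀ v ∉ B, ∃ x y : V, x ≠ y ∧ (x, v) ∈ allPsdForces G B ∧ (y, v) ∈ allPsdForces G B) →
      PsdDeriv G {ℓ} B Set.univ := by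
  intro n
  induction n using Nat.strong_induction_on with
  | _ n ih =>
    intro B hn hH
    by_cases hBu : B = Set.univ
    · subst hBu; exact .refl _
    · obtain ⟨v₀, hv₀⟩ := (Set.ne_univ_iff_exists_notMem B).mp hBu
      obtain ⟨x₀, y₀, _, hx₀, _⟩ := hH v₀ hv₀
      obtain ⟨l, hl, -⟩ := hx₀
      have hreach : PsdDeriv G ∅ B Set.univ :=
        chronToDeriv hl (by simp)
      have hA : ∃ u w, u ≠ ℓ ∧ PsdForce G ∅ B u w := by
        rcases deriv_first_force hreach with heq | ⟨u, w, hf⟩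
        · exact absurd heq hBu
        by_cases hstall : ∀ u z, PsdForce G ∅ B u z → u = ℓ
        · exfalso
          have huℓ : u = ℓ := hstall u w hf
          subst huℓ
          have hwB : w ∉ B := hf.2.2.1
          obtain ⟨x', y', hxy', hx', hy'⟩ := hH w hwB
          obtain ⟨z, hz, hzmem⟩ : ∃ z, z ≠ u ∧ (z, w) ∈ allPsdForces G B := by
            by_cases hxl : x' = u
            · exact ⟨y', fun h => hxy' (hxl.trans h.symm), hy'⟩
            · exact ⟨x', hxl, hx'⟩
          obtain ⟨l', hl', hmem'⟩ := hzmem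
          obtain ⟨D, hD, hfD⟩ := chron_mem_to_stage hl' hmem'
          exact hz (claimD hstall hf hD hfD)
        · push_neg at hstall
          obtain ⟨u', z', hforce, hne⟩ := hstall
          exact ⟨u', z', hne, hforce⟩
      obtain ⟨u, w, huℓ, hf⟩ := hA
      have hwB : w ∉ B := hf.2.2.1
      have hH' : ∀ v ∉ insert w B, ∃ x y : V, x ≠ y ∧
          (x, v) ∈ allPsdForces G (insert w B) ∧ (y, v) ∈ allPsdForces G (insert w B) := by
        intro v hv
        have hvB : v ∉ B := fun h => hv (mem_insert_of_mem _ h)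
        obtain ⟨a, b, hab, ha, hb⟩ := hH v hvB
        have lift : ∀ c : V, (c, v) ∈ allPsdForces G B → (c, v) ∈ allPsdForces G (insert w B) := by
          rintro c ⟨m, hm, hcm⟩
          obtain ⟨m', hm', -, hkeep⟩ := psdChron_replay hm (insert w B) (subset_insert _ _)
          rw [Set.union_univ] at hm'
          exact ⟨m', hm', hkeep _ hcm hv⟩
        exact ⟨a, b, hab, lift a ha, lift b hb⟩
      have hcard : ((insert w B)ᶜ).ncard < n := by
        have hci : (insert w B)ᶜ = Bᶜ \ {w} := by
          ext x
          simp [Set.mem_insert_iff, not_or, and_comm]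
        rw [hci, ← hn]
        exact Set.ncard_diff_singleton_lt_of_mem hwB (Set.toFinite _)
      have hd' := ih _ hcard (insert w B) rfl hH'
      refine deriv_trans (PsdDeriv.step (.refl B) (psdForce_leak hf ?_)) hd'
      simp [huℓ]

end Aux

/-- `B` is a `1`-leaky psd forcing set iff every `v ∉ B` has two
distinct possible forcers. -/
theorem isLeakyPsdForcingSet_one_iff [Fintype V] (G : SimpleGraph V) (B : Set V) :
    IsLeakyPsdForcingSet G 1 B ↔
      ∀ v ∉ B, ∃ x y : V, x ≠ y ∧
        (x, v) ∈ allPsdForces G B ∧ (y, v) ∈ allPsdForces G B := by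
  constructor
  · intro h v hv
    obtain ⟨l0, hl0, -⟩ := derivToChron (h ∅ Set.finite_empty (by simp))
    obtain ⟨x, hx⟩ := chron_exists_force hl0 (Set.mem_univ v) hv
    obtain ⟨l1, hl1, hforcers1⟩ :=
      derivToChron (h {x} (Set.finite_singleton x) (by simp [Set.ncard_singleton]))
    obtain ⟨y, hy⟩ := chron_exists_force hl1 (Set.mem_univ v) hv
    have hyx : y ≠ x := by
      have := hforcers1 _ hy
      simpa using this
    exact ⟨x, y, hyx.symm, ⟨l0, hl0, hx⟩, ⟨l1, hl1, hy⟩⟩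
  · intro hH L hLfin hL1
    rcases (Set.ncard_le_one_iff_eq hLfin).mp hL1 with rfl | ⟨ℓ, rfl⟩
    · by_cases hBu : B = Set.univ
      · subst hBu; exact .refl _
      · obtain ⟨v₀, hv₀⟩ := (Set.ne_univ_iff_exists_notMem B).mp hBu
        obtain ⟨x₀, y₀, _, ⟨l, hl, -⟩, _⟩ := hH v₀ hv₀
        exact chronToDeriv hl (by simp)
    · exact mainLemma G ℓ _ B rfl hH
end

section
/- For every graph G and every edge e ∈ E(G), the 1-leaky positive semidefinite forcing numbers satisfy Z⁺₍₁₎(G) − Z⁺₍₁₎(G − e) ≥ −2, i.e., Z⁺₍₁₎(G − e) ≤ Z⁺₍₁₎(G) + 2. -/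
open SimpleGraph Set

variable {V : Type*}

lemma sameComp_mono_s6 {G : SimpleGraph V} {B B' : Set V} (h : B ⊆ B') {w w' : V}
    (hs : SameComp G B' w w') : SameComp G B w w' := by
  obtain ⟨hw, hw', hr⟩ := hs
  have hsub : (B'ᶜ : Set V) ⊆ Bᶜ := compl_subset_compl.2 h
  refine ⟨hsub hw, hsub hw', ?_⟩
  let f : (G.induce B'ᶜ) →g (G.induce Bᶜ) :=
    ⟨fun v => ⟨v.1, hsub v.2⟩, fun hadj => hadj⟩
  exact hr.map f

lemma sameComp_of_le {G G' : SimpleGraph V} (hle : G' ≤ G) {B : Set V} {w w' : V}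
    (hs : SameComp G' B w w') : SameComp G B w w' := by
  obtain ⟨hw, hw', hr⟩ := hs
  refine ⟨hw, hw', ?_⟩
  let f : (G'.induce Bᶜ) →g (G.induce Bᶜ) :=
    ⟨id, fun hadj => hle hadj⟩
  exact hr.map f

lemma psdDeriv_union {G : SimpleGraph V} {L B D S : Set V}
    (h : PsdDeriv G L B D) : PsdDeriv G L (B ∪ S) (D ∪ S) := by
  induction h with
  | refl => exact PsdDeriv.refl _
  | @step C u w _ hf ih =>
      by_cases hwS : w ∈ S
      · have : (insert w C) ∪ S = C ∪ S := by
          ext z; simp only [Set.mem_union, Set.mem_insert_iff]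
          constructor
          · rintro ((rfl | h) | h)
            · exact Or.inr hwS
            · exact Or.inl h
            · exact Or.inr h
          · tauto
        rw [this]; exact ih
      · obtain ⟨hu, huL, hwC, hadj, huniq⟩ := hf
        have : insert w (C ∪ S) = (insert w C) ∪ S := by
          ext z; simp [Set.mem_insert_iff, Set.mem_union]; tauto
        rw [← this]
        refine PsdDeriv.step ih ⟨Or.inl hu, huL, ?_, hadj, ?_⟩
        · rintro (h | h) <;> [exact hwC h; exact hwS h]
        · intro w' hadj' hsc
          exact huniq w' hadj' (sameComp_mono_s6 Set.subset_union_left hsc)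

lemma psdDeriv_subset {G : SimpleGraph V} {L B D : Set V}
    (h : PsdDeriv G L B D) : B ⊆ D := by
  induction h with
  | refl => exact subset_rfl
  | step _ _ ih => exact ih.trans (Set.subset_insert _ _)

lemma psdDeriv_deleteEdges {G : SimpleGraph V} {L B D : Set V} {x y : V}
    (hx : x ∈ B) (hy : y ∈ B) (h : PsdDeriv G L B D) :
    PsdDeriv (G.deleteEdges {s(x, y)}) L B D := by
  induction h with
  | refl => exact PsdDeriv.refl _
  | @step C u w hder hf ih =>
      obtain ⟨hu, huL, hwC, hadj, huniq⟩ := hf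
      have hxC : x ∈ C := psdDeriv_subset hder hx
      have hyC : y ∈ C := psdDeriv_subset hder hy
      refine PsdDeriv.step ih ⟨hu, huL, hwC, ?_, ?_⟩
      · rw [SimpleGraph.deleteEdges_adj]
        refine ⟨hadj, ?_⟩
        simp only [Set.mem_singleton_iff, Sym2.eq, Sym2.rel_iff', Prod.mk.injEq,
          Prod.swap_prod_mk]
        rintro (⟨rfl, rfl⟩ | ⟨rfl, rfl⟩)
        · exact hwC hyC
        · exact hwC hxC
      · intro w' hadj' hsc
        have hadj'' : G.Adj u w' := (SimpleGraph.deleteEdges_adj.mp hadj').1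
        have hsc' : SameComp G C w w' :=
          sameComp_of_le (SimpleGraph.deleteEdges_le _) hsc
        exact huniq w' hadj'' hsc'

/-- `Z⁺₍₁₎(G − e) ≤ Z⁺₍₁₎(G) + 2` for every edge `e` of `G`. -/
theorem leakyPsdNum_deleteEdge [Fintype V] (G : SimpleGraph V) (e : Sym2 V)
    (he : e ∈ G.edgeSet) :
    leakyPsdNum (G.deleteEdges {e}) 1 ≤ leakyPsdNum G 1 + 2 := by
  induction e with
  | _ x y =>
    -- the set defining leakyPsdNum G 1 is nonempty (univ works)
    have hne : (leakyPsdNum G 1) ∈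
        {k | ∃ B : Set V, B.ncard = k ∧ IsLeakyPsdForcingSet G 1 B} := by
      apply Nat.sInf_mem
      exact ⟨(Set.univ : Set V).ncard, Set.univ, rfl,
        fun L _ _ => PsdDeriv.refl _⟩
    obtain ⟨B, hBcard, hB⟩ := hne
    set B' : Set V := B ∪ {x, y} with hB'
    have hforce : IsLeakyPsdForcingSet (G.deleteEdges {s(x, y)}) 1 B' := by
      intro L hLfin hLcard
      have h1 : PsdDeriv G L B' (Set.univ ∪ {x, y}) :=
        psdDeriv_union (hB L hLfin hLcard)
      rw [Set.univ_union] at h1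
      exact psdDeriv_deleteEdges (Or.inr (by simp)) (Or.inr (by simp)) h1
    have hmem : B'.ncard ∈
        {k | ∃ B : Set V, B.ncard = k ∧
          IsLeakyPsdForcingSet (G.deleteEdges {s(x, y)}) 1 B} :=
      ⟨B', rfl, hforce⟩
    have h1 : leakyPsdNum (G.deleteEdges {s(x, y)}) 1 ≤ B'.ncard :=
      Nat.sInf_le hmem
    have h2 : B'.ncard ≤ B.ncard + 2 := by
      have : B' = insert x (insert y B) := by
        ext z; simp only [hB', Set.mem_union, Set.mem_insert_iff]; tauto
      rw [this]
      calc (insert x (insert y B)).ncard ≤ (insert y B).ncard + 1 :=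
            Set.ncard_insert_le _ _
        _ ≤ B.ncard + 1 + 1 := by
            have := Set.ncard_insert_le y B; omega
        _ = B.ncard + 2 := by omega
    omega
end

section
/- Let Pₙ be the path graph on n ≥ 2 vertices. Then the ℓ-leaky positive semidefinite forcing number satisfies: Z⁺₍₀₎(Pₙ) = 1, Z⁺₍₁₎(Pₙ) = 2, and Z⁺₍ℓ₎(Pₙ) = n for all ℓ ≥ 2. -/
open SimpleGraph Set

variable {V : Type*}

/-- Blue intervals from both ends. -/
def Cset (n a b : ℕ) : Set (Fin n) := {i | i.val ≤ a ∨ b ≤ i.val}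

lemma forceLeft {n : ℕ} (L : Set (Fin n)) (a b : ℕ) (hab : a + 1 < b) (hb : b ≤ n)
    (hL : (⟨a, by omega⟩ : Fin n) ∉ L) :
    PsdForce (pathGraph n) L (Cset n a b) ⟨a, by omega⟩ ⟨a + 1, by omega⟩ := by
  refine ⟨Or.inl le_rfl, hL, ?_, ?_, ?_⟩
  · simp only [Cset, Set.mem_setOf_eq]; omega
  · rw [pathGraph_adj]; left; rfl
  · rintro w' hadj ⟨-, hw', -⟩
    simp only [Set.mem_compl_iff, Cset, Set.mem_setOf_eq] at hw'
    rw [pathGraph_adj] at hadj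
    simp only [Fin.ext_iff] at hadj ⊢
    omega

lemma forceRight {n : ℕ} (L : Set (Fin n)) (a b : ℕ) (hab : a + 1 < b) (hb : b < n)
    (hL : (⟨b, by omega⟩ : Fin n) ∉ L) :
    PsdForce (pathGraph n) L (Cset n a b) ⟨b, by omega⟩ ⟨b - 1, by omega⟩ := by
  refine ⟨Or.inr le_rfl, hL, ?_, ?_, ?_⟩
  · simp only [Cset, Set.mem_setOf_eq]; omega
  · rw [pathGraph_adj]; right; simp; omega
  · rintro w' hadj ⟨-, hw', -⟩
    simp only [Set.mem_compl_iff, Cset, Set.mem_setOf_eq] at hw'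
    rw [pathGraph_adj] at hadj
    simp only [Fin.ext_iff] at hadj ⊢
    omega

lemma insertLeft {n : ℕ} (a b : ℕ) (hab : a + 1 < b) (hb : b ≤ n) :
    insert (⟨a + 1, by omega⟩ : Fin n) (Cset n a b) = Cset n (a + 1) b := by
  ext i
  simp only [Set.mem_insert_iff, Cset, Set.mem_setOf_eq, Fin.ext_iff]
  omega

lemma insertRight {n : ℕ} (a b : ℕ) (hab : a + 1 < b) (hb : b < n) :
    insert (⟨b - 1, by omega⟩ : Fin n) (Cset n a b) = Cset n a (b - 1) := by
  ext i
  simp only [Set.mem_insert_iff, Cset, Set.mem_setOf_eq, Fin.ext_iff]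
  omega

lemma advanceLeft {n : ℕ} (L B : Set (Fin n)) (a b : ℕ) (hb : b ≤ n) :
    ∀ a', a ≤ a' → a' < b → (∀ v : Fin n, a ≤ v.val → v.val < a' → v ∉ L) →
      PsdDeriv (pathGraph n) L B (Cset n a b) → PsdDeriv (pathGraph n) L B (Cset n a' b) := by
  intro a' ha'
  induction a', ha' using Nat.le_induction with
  | base => intro _ _ h; exact h
  | succ k hk ih =>
    intro hkb hL h
    rw [← insertLeft k b hkb hb]
    exact PsdDeriv.step (ih (by omega) (fun v h1 h2 => hL v h1 (by omega)) h)
      (forceLeft L k b hkb hb (hL ⟨k, by omega⟩ hk (Nat.lt_succ_self k)))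

lemma advanceRight {n : ℕ} (L B : Set (Fin n)) (a b' : ℕ) (hab : a + 1 ≤ b') :
    ∀ b, b' ≤ b → b < n → (∀ v : Fin n, b' < v.val → v ∉ L) →
      PsdDeriv (pathGraph n) L B (Cset n a b) → PsdDeriv (pathGraph n) L B (Cset n a b') := by
  intro b hb
  induction b, hb using Nat.le_induction with
  | base => intro _ _ h; exact h
  | succ k hk ih =>
    intro hkn hL h
    have h1 : a + 1 < k + 1 := by omega
    have hstep := PsdDeriv.step h (forceRight L a (k + 1) h1 hkn (hL ⟨k + 1, by omega⟩ (Nat.lt_succ_of_le hk)))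
    rw [insertRight a (k + 1) h1 hkn] at hstep
    simp only [Nat.add_sub_cancel] at hstep
    exact ih (by omega) hL hstep

lemma psdDeriv_empty {n : ℕ} (G : SimpleGraph (Fin n)) (L C : Set (Fin n))
    (h : PsdDeriv G L ∅ C) : C = ∅ := by
  induction h with
  | refl => rfl
  | step _ hf ih => exact absurd (ih ▸ hf.1) (Set.notMem_empty _)

lemma psdDeriv_single {n : ℕ} (G : SimpleGraph (Fin n)) (v : Fin n) (C : Set (Fin n))
    (h : PsdDeriv G {v} {v} C) : C = {v} := by
  induction h with
  | refl => rfl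
  | step _ hf ih => exact absurd (ih ▸ hf.1) (fun hm => hf.2.1 hm)

lemma psdDeriv_no_force {G : SimpleGraph V} {L B C : Set V} {w : V} (hw : w ∉ B)
    (hnb : ∀ u, G.Adj u w → u ∈ L) (h : PsdDeriv G L B C) : w ∉ C := by
  induction h with
  | refl => exact hw
  | step _ hf ih =>
    rintro (rfl | hm)
    · exact hf.2.1 (hnb _ hf.2.2.2.1)
    · exact ih hm

lemma cset_univ {n a b : ℕ} (h : b ≤ a + 1) : Cset n a b = Set.univ := by
  ext i; simp only [Cset, Set.mem_setOf_eq, Set.mem_univ, iff_true]; omega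

/-- leaky psd forcing numbers of the path `Pₙ`, `n ≥ 2`. -/
theorem leakyPsdNum_pathGraph (n : ℕ) (hn : 2 ≤ n) :
    leakyPsdNum (pathGraph n) 0 = 1 ∧ leakyPsdNum (pathGraph n) 1 = 2 ∧
      ∀ ℓ : ℕ, 2 ≤ ℓ → leakyPsdNum (pathGraph n) ℓ = n := by
  have h0notin : ∀ ℓ, 0 ∉ {k | ∃ B : Set (Fin n), B.ncard = k ∧
      IsLeakyPsdForcingSet (pathGraph n) ℓ B} := by
    rintro ℓ ⟨B, hB, hF⟩
    rw [Set.ncard_eq_zero (Set.toFinite B)] at hB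
    subst hB
    have := psdDeriv_empty _ _ _ (hF ∅ Set.finite_empty (by simp))
    exact absurd (this ▸ Set.mem_univ (⟨0, by omega⟩ : Fin n)) (Set.notMem_empty _)
  refine ⟨?_, ?_, ?_⟩
  · -- ℓ = 0
    have h1 : 1 ∈ {k | ∃ B : Set (Fin n), B.ncard = k ∧
        IsLeakyPsdForcingSet (pathGraph n) 0 B} := by
      refine ⟨Cset n 0 n, ?_, ?_⟩
      · have : Cset n 0 n = {(⟨0, by omega⟩ : Fin n)} := by
          ext i; simp only [Cset, Set.mem_setOf_eq, Set.mem_singleton_iff, Fin.ext_iff]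
          have := i.isLt; omega
        rw [this, Set.ncard_singleton]
      · intro L hfin hcard
        rw [Nat.le_zero, Set.ncard_eq_zero hfin] at hcard
        subst hcard
        have := advanceLeft ∅ (Cset n 0 n) 0 n le_rfl (n - 1) (Nat.zero_le _) (by omega)
          (fun v _ _ h => h) (PsdDeriv.refl _)
        rwa [cset_univ (n := n) (a := n - 1) (b := n) (by omega)] at this
    have hmem := Nat.sInf_mem ⟨1, h1⟩
    have hle := Nat.sInf_le h1
    have hne : sInf {k | ∃ B : Set (Fin n), B.ncard = k ∧
        IsLeakyPsdForcingSet (pathGraph n) 0 B} ≠ 0 := fun h => h0notin 0 (by rw [h] at hmem; exact hmem)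
    unfold leakyPsdNum; omega
  · -- ℓ = 1
    have h2 : 2 ∈ {k | ∃ B : Set (Fin n), B.ncard = k ∧
        IsLeakyPsdForcingSet (pathGraph n) 1 B} := by
      refine ⟨Cset n 0 (n - 1), ?_, ?_⟩
      · have : Cset n 0 (n - 1) = {(⟨0, by omega⟩ : Fin n), (⟨n - 1, by omega⟩ : Fin n)} := by
          ext i
          simp only [Cset, Set.mem_setOf_eq, Set.mem_insert_iff, Set.mem_singleton_iff,
            Fin.ext_iff]
          have := i.isLt; omega
        rw [this, Set.ncard_pair (by simp [Fin.ext_iff]; omega)]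
      · intro L hfin hcard
        rcases (Set.ncard_le_one_iff_eq hfin).1 hcard with rfl | ⟨p, rfl⟩
        · have := advanceLeft ∅ (Cset n 0 (n - 1)) 0 (n - 1) (by omega) (n - 2)
            (Nat.zero_le _) (by omega) (fun v _ _ h => h) (PsdDeriv.refl _)
          rwa [cset_univ (n := n) (a := n - 2) (b := n - 1) (by omega)] at this
        · by_cases hp0 : p.val = 0
          · have := advanceRight {p} (Cset n 0 (n - 1)) 0 1 le_rfl (n - 1) (by omega)
              (by omega) (fun v hv hm => by rw [Set.mem_singleton_iff] at hm; omega)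
              (PsdDeriv.refl _)
            rwa [cset_univ (n := n) (a := 0) (b := 1) (by omega)] at this
          · by_cases hpn : p.val + 1 < n
            · have s1 := advanceLeft {p} (Cset n 0 (n - 1)) 0 (n - 1) (by omega) p.val
                (Nat.zero_le _) (by omega) (fun v _ hv hm => by
                  rw [Set.mem_singleton_iff] at hm; subst hm; omega) (PsdDeriv.refl _)
              have s2 := advanceRight {p} (Cset n 0 (n - 1)) p.val (p.val + 1) le_rfl
                (n - 1) (by omega) (by omega) (fun v hv hm => by
                  rw [Set.mem_singleton_iff] at hm; subst hm; omega) s1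
              rwa [cset_univ (n := n) (a := p.val) (b := p.val + 1) (by omega)] at s2
            · have hplast : p.val = n - 1 := by have := p.isLt; omega
              have := advanceLeft {p} (Cset n 0 (n - 1)) 0 (n - 1) (by omega) (n - 2)
                (Nat.zero_le _) (by omega) (fun v _ hv hm => by
                  rw [Set.mem_singleton_iff] at hm; subst hm; omega) (PsdDeriv.refl _)
              rwa [cset_univ (n := n) (a := n - 2) (b := n - 1) (by omega)] at this
    have h1notin : 1 ∉ {k | ∃ B : Set (Fin n), B.ncard = k ∧
        IsLeakyPsdForcingSet (pathGraph n) 1 B} := by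
      rintro ⟨B, hB, hF⟩
      rw [Set.ncard_eq_one] at hB
      obtain ⟨v, rfl⟩ := hB
      have := psdDeriv_single _ v _ (hF {v} (Set.finite_singleton v) (by simp))
      have h0 : (⟨0, by omega⟩ : Fin n) ∈ ({v} : Set (Fin n)) := by
        rw [← this]; trivial
      have h1' : (⟨1, by omega⟩ : Fin n) ∈ ({v} : Set (Fin n)) := by
        rw [← this]; trivial
      rw [Set.mem_singleton_iff] at h0 h1'
      rw [← h0, Fin.ext_iff] at h1'
      simp at h1'
    have hmem := Nat.sInf_mem ⟨2, h2⟩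
    have hle := Nat.sInf_le h2
    have hne0 : sInf {k | ∃ B : Set (Fin n), B.ncard = k ∧
        IsLeakyPsdForcingSet (pathGraph n) 1 B} ≠ 0 := fun h => h0notin 1 (by rw [h] at hmem; exact hmem)
    have hne1 : sInf {k | ∃ B : Set (Fin n), B.ncard = k ∧
        IsLeakyPsdForcingSet (pathGraph n) 1 B} ≠ 1 := fun h => h1notin (by rw [h] at hmem; exact hmem)
    unfold leakyPsdNum; omega
  · -- ℓ ≥ 2
    intro ℓ hℓ
    have hS : {k | ∃ B : Set (Fin n), B.ncard = k ∧
        IsLeakyPsdForcingSet (pathGraph n) ℓ B} = {n} := by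
      ext k
      simp only [Set.mem_setOf_eq, Set.mem_singleton_iff]
      constructor
      · rintro ⟨B, rfl, hF⟩
        have hBu : B = Set.univ := by
          by_contra hne
          obtain ⟨w, hw⟩ := (Set.ne_univ_iff_exists_notMem B).1 hne
          set L : Set (Fin n) := {u | (pathGraph n).Adj u w} with hL
          have hsub : L ⊆ {(⟨w.val - 1, by have := w.isLt; omega⟩ : Fin n),
              (if h : w.val + 1 < n then (⟨w.val + 1, h⟩ : Fin n)
                else ⟨w.val - 1, by have := w.isLt; omega⟩)} := by
            intro u hu
            rw [hL, Set.mem_setOf_eq, pathGraph_adj] at hu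
            simp only [Set.mem_insert_iff, Set.mem_singleton_iff]
            rcases hu with h | h
            · left; rw [Fin.ext_iff]; simp; omega
            · right
              have hlt : w.val + 1 < n := h ▸ u.isLt
              rw [dif_pos hlt, Fin.ext_iff]; simp; omega
          have hcard : L.ncard ≤ ℓ := by
            calc L.ncard ≤ _ := Set.ncard_le_ncard hsub (Set.toFinite _)
            _ ≤ 1 + 1 := le_trans (Set.ncard_insert_le _ _)
                (by simp)
            _ ≤ ℓ := hℓ
          have hderiv := hF L (Set.toFinite L) hcard
          exact psdDeriv_no_force hw (fun u h => h) hderiv (Set.mem_univ w)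
        rw [hBu, Set.ncard_univ, Nat.card_eq_fintype_card, Fintype.card_fin]
      · rintro rfl
        exact ⟨Set.univ, by rw [Set.ncard_univ, Nat.card_eq_fintype_card, Fintype.card_fin],
          fun L _ _ => PsdDeriv.refl _⟩
    unfold leakyPsdNum
    rw [hS, csInf_singleton]
end

section
/- Let Cₙ be the cycle graph on n ≥ 3 vertices. Then Z⁺₍₀₎(Cₙ) = Z⁺₍₁₎(Cₙ) = 2, and Z⁺₍ℓ₎(Cₙ) = n for all ℓ ≥ 2. -/
open SimpleGraph Set

variable {V : Type*}

/-! ### Auxiliary general lemmas -/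

lemma PsdDeriv.trans' {G : SimpleGraph V} {L A B C : Set V}
    (h1 : PsdDeriv G L A B) (h2 : PsdDeriv G L B C) : PsdDeriv G L A C := by
  induction h2 with
  | refl => exact h1
  | step _ hf ih => exact ih.step hf

lemma psdDeriv_elim {G : SimpleGraph V} {L B C : Set V} (h : PsdDeriv G L B C) :
    ∀ v ∈ C, v ∈ B ∨ ∃ u, u ∉ L ∧ G.Adj u v := by
  induction h with
  | refl => exact fun v hv => Or.inl hv
  | step _ hf ih =>
    intro v hv
    rcases Set.mem_insert_iff.mp hv with rfl | hv
    · exact Or.inr ⟨_, hf.2.1, hf.2.2.2.1⟩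
    · exact ih v hv

lemma psdDeriv_stuck {G : SimpleGraph V} {L B C : Set V} (h : PsdDeriv G L B C)
    (hB : ∀ u w, ¬ PsdForce G L B u w) : C = B := by
  induction h with
  | refl => rfl
  | step _ hf ih => rw [ih] at hf; exact absurd hf (hB _ _)

lemma SameComp.symm' {G : SimpleGraph V} {B : Set V} {w w' : V}
    (h : SameComp G B w w') : SameComp G B w' w := by
  obtain ⟨hw, hw', hr⟩ := h
  exact ⟨hw', hw, hr.symm⟩

section Cyc

variable {n : ℕ} [NeZero n]

lemma val_one_of (hn : 3 ≤ n) : (1 : Fin n).val = 1 := by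
  rw [Fin.val_one']; exact Nat.mod_eq_of_lt (by omega)

lemma val_add_one' (hn : 3 ≤ n) (u : Fin n) : (u + 1).val = (u.val + 1) % n := by
  rw [Fin.add_def, val_one_of hn]

lemma cycle_adj_iff (hn : 3 ≤ n) {u v : Fin n} :
    (cycleGraph n).Adj u v ↔ u = v + 1 ∨ v = u + 1 := by
  rw [cycleGraph_adj']
  have key : ∀ a b : Fin n, (a - b).val = 1 ↔ a = b + 1 := by
    intro a b
    rw [show (1:ℕ) = (1 : Fin n).val from (val_one_of hn).symm, ← Fin.ext_iff,
      sub_eq_iff_eq_add, add_comm]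
  rw [key, key]

/-- The "two arcs" blue set: values `≤ k` or `≥ m`. -/
def EArc (n k m : ℕ) : Set (Fin n) := {v | v.val ≤ k ∨ m ≤ v.val}

lemma cw (hn : 3 ≤ n) {L : Set (Fin n)} :
    ∀ K : ℕ, 1 ≤ K → K ≤ n - 1 → (∀ v : Fin n, 1 ≤ v.val → v.val < K → v ∉ L) →
    PsdDeriv (cycleGraph n) L (EArc n 1 n) (EArc n K n) := by
  intro K
  induction K with
  | zero => omega
  | succ K ih =>
    intro hK1 hK hL
    rcases Nat.eq_or_lt_of_le hK1 with h1 | h1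
    · rw [← h1]; exact PsdDeriv.refl _
    have hK1' : 1 ≤ K := by omega
    have hprev : PsdDeriv (cycleGraph n) L (EArc n 1 n) (EArc n K n) :=
      ih hK1' (by omega) (fun v a b hvL => hL v a (by omega) hvL)
    set u : Fin n := ⟨K, by omega⟩ with hu
    have huval : u.val = K := rfl
    have hwval : (u + 1).val = K + 1 := by
      rw [val_add_one' hn, huval]; exact Nat.mod_eq_of_lt (by omega)
    have hforce : PsdForce (cycleGraph n) L (EArc n K n) u (u + 1) := by
      refine ⟨Or.inl (le_of_eq huval), hL u (by omega) (by omega), ?_, ?_, ?_⟩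
      · intro hmem
        rcases hmem with h | h
        · rw [hwval] at h; omega
        · have := (u + 1).isLt; omega
      · exact (cycle_adj_iff hn).mpr (Or.inr rfl)
      · rintro w' hadj ⟨-, hw', -⟩
        rw [Set.mem_compl_iff] at hw'
        rcases (cycle_adj_iff hn).mp hadj with h | h
        · exfalso
          apply hw'
          have hmod : (w'.val + 1) % n = K := by
            rw [← huval, h, val_add_one' hn]
          rcases Nat.lt_or_ge (w'.val + 1) n with hlt | hge
          · rw [Nat.mod_eq_of_lt hlt] at hmod
            exact Or.inl (by omega)
          · have hval : w'.val + 1 = n := by have := w'.isLt; omega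
            rw [hval, Nat.mod_self] at hmod
            omega
        · exact h
    have hins : insert (u + 1) (EArc n K n) = EArc n (K + 1) n := by
      ext v
      simp only [Set.mem_insert_iff, EArc, Set.mem_setOf_eq]
      constructor
      · rintro (rfl | h | h)
        · exact Or.inl (le_of_eq hwval)
        · exact Or.inl (by omega)
        · exact Or.inr h
      · rintro (h | h)
        · rcases Nat.lt_or_ge v.val (K + 1) with h2 | h2
          · exact Or.inr (Or.inl (by omega))
          · left; apply Fin.ext; rw [hwval]; omega
        · exact Or.inr (Or.inr h)
    exact hins ▸ hprev.step hforce

lemma ccw (hn : 3 ≤ n) {L : Set (Fin n)} {K : ℕ} (hK1 : 1 ≤ K) (_hK : K ≤ n - 1)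
    (hL0 : (0 : Fin n) ∉ L) (hL : ∀ v : Fin n, K + 2 ≤ v.val → v ∉ L) :
    ∀ d, d ≤ n - 1 - K → PsdDeriv (cycleGraph n) L (EArc n K n) (EArc n K (n - d)) := by
  intro d
  induction d with
  | zero => intro _; exact PsdDeriv.refl _
  | succ d ih =>
    intro hd
    have hprev := ih (by omega)
    have hm1 : K + 1 ≤ n - d - 1 := by omega
    have hmlt : n - d - 1 < n := by omega
    set m : ℕ := n - d - 1 with hm
    set w : Fin n := ⟨m, hmlt⟩ with hw
    have hwval : w.val = m := rfl
    have huval : (w + 1).val = (m + 1) % n := by rw [val_add_one' hn, hwval]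
    have hndm : n - d = m + 1 := by omega
    rw [hndm] at hprev
    have hforce : PsdForce (cycleGraph n) L (EArc n K (m + 1)) (w + 1) w := by
      refine ⟨?_, ?_, ?_, ?_, ?_⟩
      · rcases Nat.lt_or_ge (m + 1) n with hlt | hge
        · right; rw [huval, Nat.mod_eq_of_lt hlt]
        · left; rw [huval, show m + 1 = n by omega, Nat.mod_self]; omega
      · rcases Nat.lt_or_ge (m + 1) n with hlt | hge
        · exact hL _ (by rw [huval, Nat.mod_eq_of_lt hlt]; omega)
        · have h0 : w + 1 = 0 := by
            apply Fin.ext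
            rw [huval, show m + 1 = n by omega, Nat.mod_self, Fin.val_zero]
          rw [h0]; exact hL0
      · intro hmem
        rcases hmem with h | h
        · rw [hwval] at h; omega
        · rw [hwval] at h; omega
      · exact (cycle_adj_iff hn).mpr (Or.inl rfl)
      · rintro w' hadj ⟨-, hw', -⟩
        rw [Set.mem_compl_iff] at hw'
        rcases (cycle_adj_iff hn).mp hadj with h | h
        · exact (add_right_cancel h).symm
        · exfalso
          apply hw'
          have hval : w'.val = ((m + 1) % n + 1) % n := by
            rw [h, val_add_one' hn, huval]
          rcases Nat.lt_or_ge (m + 1) n with hlt | hge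
          · rw [Nat.mod_eq_of_lt hlt] at hval
            rcases Nat.lt_or_ge (m + 2) n with hlt2 | hge2
            · rw [Nat.mod_eq_of_lt (by omega : m + 1 + 1 < n)] at hval
              exact Or.inr (by omega)
            · rw [show m + 1 + 1 = n by omega, Nat.mod_self] at hval
              exact Or.inl (by omega)
          · rw [show m + 1 = n by omega, Nat.mod_self,
              Nat.mod_eq_of_lt (by omega : 0 + 1 < n)] at hval
            exact Or.inl (by omega)
    have hins : insert w (EArc n K (m + 1)) = EArc n K m := by
      ext v
      simp only [Set.mem_insert_iff, EArc, Set.mem_setOf_eq]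
      constructor
      · rintro (rfl | h | h)
        · exact Or.inr (le_of_eq hwval.symm)
        · exact Or.inl h
        · exact Or.inr (by omega)
      · rintro (h | h)
        · exact Or.inr (Or.inl h)
        · rcases Nat.eq_or_lt_of_le h with he | hlt
          · left; exact Fin.ext he.symm
          · exact Or.inr (Or.inr (by omega))
    rw [show n - (d + 1) = m by omega]
    exact hins ▸ hprev.step hforce

lemma forcing01 (hn : 3 ≤ n) : IsLeakyPsdForcingSet (cycleGraph n) 1 (EArc n 1 n) := by
  intro L hfin hcard
  by_cases hx : ∃ x ∈ L, 1 ≤ x.val ∧ x.val ≤ n - 2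
  · obtain ⟨x, hxL, hx1, hx2⟩ := hx
    have hsing : ∀ y ∈ L, y = x := fun y hy => (Set.ncard_le_one hfin).mp hcard y hy x hxL
    have h1 : PsdDeriv (cycleGraph n) L (EArc n 1 n) (EArc n x.val n) :=
      cw hn x.val hx1 (by omega) (by
        intro v h1v h2v hvL
        have hvx := hsing v hvL
        rw [hvx] at h2v
        omega)
    have h2 : PsdDeriv (cycleGraph n) L (EArc n x.val n)
        (EArc n x.val (n - (n - 1 - x.val))) :=
      ccw hn hx1 (by omega)
        (by
          intro h0
          have h00 := congrArg Fin.val (hsing 0 h0)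
          rw [Fin.val_zero] at h00
          omega)
        (by
          intro v hv hvL
          have hvx := hsing v hvL
          rw [hvx] at hv
          omega)
        (n - 1 - x.val) le_rfl
    rw [show n - (n - 1 - x.val) = x.val + 1 by omega] at h2
    have h3 := h1.trans' h2
    have huniv : EArc n x.val (x.val + 1) = Set.univ :=
      Set.eq_univ_of_forall (fun v => by simp only [EArc, Set.mem_setOf_eq]; omega)
    rwa [huniv] at h3
  · push_neg at hx
    have h1 := cw hn (n - 1) (by omega) le_rfl (by
      intro v h1v h2v hvL
      have := hx v hvL h1v
      omega)
    have huniv : EArc n (n - 1) n = Set.univ :=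
      Set.eq_univ_of_forall (fun v => by
        simp only [EArc, Set.mem_setOf_eq]
        have := v.isLt
        omega)
    rwa [huniv] at h1

open Fin.NatCast in
lemma reach_around (hn : 3 ≤ n) (b : Fin n) :
    SameComp (cycleGraph n) {b} (b + 1) (b - 1) := by
  have hmem : ∀ i : ℕ, 1 ≤ i → i < n → b + (i : Fin n) ∈ ({b} : Set (Fin n))ᶜ := by
    intro i h1 h2
    simp only [Set.mem_compl_iff, Set.mem_singleton_iff]
    intro he
    have hz : (i : Fin n) = 0 := by
      have := add_left_cancel (a := b) (b := (i : Fin n)) (c := 0)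
        (by rw [add_zero]; exact he)
      exact this
    have hv : (i : Fin n).val = i := Fin.val_cast_of_lt h2
    rw [hz, Fin.val_zero] at hv
    omega
  have hmem1 : b + 1 ∈ ({b} : Set (Fin n))ᶜ := by
    have := hmem 1 le_rfl (by omega)
    rwa [Nat.cast_one] at this
  have key : ∀ i : ℕ, 1 ≤ i → i < n → ∀ hp : b + (i : Fin n) ∈ ({b} : Set (Fin n))ᶜ,
      ((cycleGraph n).induce ({b} : Set (Fin n))ᶜ).Reachable ⟨b + 1, hmem1⟩
        ⟨b + (i : Fin n), hp⟩ := by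
    intro i
    induction i with
    | zero => intro h; exact absurd h (by omega)
    | succ i ih =>
      intro h1 h2 hp
      rcases Nat.lt_or_ge 1 (i + 1) with hlt | hle
      · have hi : 1 ≤ i := by omega
        have hi2 : i < n := by omega
        have hadj : (cycleGraph n).Adj (b + (i : Fin n)) (b + ((i + 1 : ℕ) : Fin n)) := by
          apply (cycle_adj_iff hn).mpr
          right
          rw [Nat.cast_add, Nat.cast_one, ← add_assoc]
        have hstep : ((cycleGraph n).induce ({b} : Set (Fin n))ᶜ).Adj
            ⟨b + (i : Fin n), hmem i hi hi2⟩ ⟨b + ((i + 1 : ℕ) : Fin n), hp⟩ := by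
          rw [comap_adj]
          exact hadj
        exact (ih hi hi2 _).trans hstep.reachable
      · have hi1 : i + 1 = 1 := by omega
        have hveq : (⟨b + ((i + 1 : ℕ) : Fin n), hp⟩ : ↥(({b} : Set (Fin n))ᶜ)) =
            ⟨b + 1, hmem1⟩ := by
          apply Subtype.ext
          show b + ((i + 1 : ℕ) : Fin n) = b + 1
          rw [hi1, Nat.cast_one]
        rw [hveq]
  have hcast : ((n - 1 : ℕ) : Fin n) = -1 := by
    have h0 : ((n - 1 : ℕ) : Fin n) + 1 = 0 := by
      have hh : (((n - 1) + 1 : ℕ) : Fin n) = 0 := by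
        rw [show n - 1 + 1 = n by omega]; exact Fin.natCast_self n
      rwa [Nat.cast_add, Nat.cast_one] at hh
    exact eq_neg_of_add_eq_zero_left h0
  have hb : b + ((n - 1 : ℕ) : Fin n) = b - 1 := by rw [hcast, sub_eq_add_neg]
  have hm2 : b - 1 ∈ ({b} : Set (Fin n))ᶜ := hb ▸ hmem (n - 1) (by omega) (by omega)
  refine ⟨hmem1, hm2, ?_⟩
  have hr := key (n - 1) (by omega) (by omega) (hb ▸ hm2)
  have hveq : (⟨b + ((n - 1 : ℕ) : Fin n), hb ▸ hm2⟩ : ↥(({b} : Set (Fin n))ᶜ)) =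
      ⟨b - 1, hm2⟩ := Subtype.ext hb
  rwa [hveq] at hr

lemma two_ne_zero_fin (hn : 3 ≤ n) (b : Fin n) : b + 1 ≠ b - 1 := by
  intro h
  rw [sub_eq_add_neg] at h
  have h1 : (1 : Fin n) = -1 := add_left_cancel h
  have h2 : (1 : Fin n) + 1 = 0 := by nth_rewrite 2 [h1]; exact add_neg_cancel 1
  have h3 := val_add_one' hn 1
  rw [h2, val_one_of hn, Fin.val_zero, Nat.mod_eq_of_lt (by omega : 1 + 1 < n)] at h3
  omega

lemma no_force_single (hn : 3 ≤ n) (b : Fin n) (L : Set (Fin n)) :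
    ∀ u w, ¬ PsdForce (cycleGraph n) L {b} u w := by
  rintro u w ⟨huB, -, hwB, hadj, huniq⟩
  rw [Set.mem_singleton_iff] at huB
  subst huB
  rcases (cycle_adj_iff hn).mp hadj with h | h
  · -- w = u + 1, so w = u - 1
    have hww : w = u - 1 := eq_sub_iff_add_eq.mpr h.symm
    have h2 := huniq (u + 1) ((cycle_adj_iff hn).mpr (Or.inr rfl))
      (by rw [hww]; exact (reach_around hn u).symm')
    exact two_ne_zero_fin hn u (h2.trans hww)
  · have hww : w = u + 1 := h
    have h2 := huniq (u - 1)
      ((cycle_adj_iff hn).mpr (Or.inl (by rw [sub_add_cancel])))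
      (by rw [hww]; exact reach_around hn u)
    exact two_ne_zero_fin hn u (hww ▸ h2.symm)

lemma two_le_ncard_of (hn : 3 ≤ n) {B : Set (Fin n)} {ℓ : ℕ}
    (h : IsLeakyPsdForcingSet (cycleGraph n) ℓ B) : 2 ≤ B.ncard := by
  by_contra hlt
  push_neg at hlt
  have hd := h ∅ Set.finite_empty (by simp)
  have h1 : B.ncard ≤ 1 := by omega
  rcases (Set.ncard_le_one_iff_eq (Set.toFinite B)).mp h1 with rfl | ⟨b, rfl⟩
  · have heq := psdDeriv_stuck hd (by rintro u w ⟨hu, -⟩; exact hu)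
    have h0 : (0 : Fin n) ∈ (∅ : Set (Fin n)) := by
      rw [← heq]; exact Set.mem_univ _
    simp at h0
  · have heq := psdDeriv_stuck hd (no_force_single hn b ∅)
    have hb1 : b + 1 ∈ ({b} : Set (Fin n)) := by
      rw [← heq]; exact Set.mem_univ _
    rw [Set.mem_singleton_iff] at hb1
    have h10 : (1 : Fin n) = 0 :=
      add_left_cancel (a := b) (by rw [add_zero]; exact hb1)
    have := congrArg Fin.val h10
    rw [val_one_of hn, Fin.val_zero] at this
    omega

lemma eq_univ_of_forcing (hn : 3 ≤ n) {B : Set (Fin n)} {ℓ : ℕ} (hℓ : 2 ≤ ℓ)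
    (h : IsLeakyPsdForcingSet (cycleGraph n) ℓ B) : B = Set.univ := by
  by_contra hne
  obtain ⟨w, hw⟩ := (Set.ne_univ_iff_exists_notMem B).mp hne
  have hcard : ({w + 1, w - 1} : Set (Fin n)).ncard ≤ ℓ := by
    refine le_trans (le_trans (Set.ncard_insert_le _ _) ?_) hℓ
    simp
  have hd := h {w + 1, w - 1} (Set.toFinite _) hcard
  rcases psdDeriv_elim hd w (Set.mem_univ w) with h1 | ⟨u, huL, hadj⟩
  · exact hw h1
  · rcases (cycle_adj_iff hn).mp hadj with h2 | h2
    · exact huL (by rw [h2]; exact Set.mem_insert _ _)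
    · have hu : u = w - 1 := eq_sub_iff_add_eq.mpr h2.symm
      exact huL (by rw [hu]; exact Set.mem_insert_iff.mpr (Or.inr rfl))

end Cyc

/-- leaky psd forcing numbers of the cycle `Cₙ`, `n ≥ 3`. -/
theorem leakyPsdNum_cycleGraph (n : ℕ) (hn : 3 ≤ n) :
    leakyPsdNum (cycleGraph n) 0 = 2 ∧ leakyPsdNum (cycleGraph n) 1 = 2 ∧
      ∀ ℓ : ℕ, 2 ≤ ℓ → leakyPsdNum (cycleGraph n) ℓ = n := by
  haveI : NeZero n := ⟨by omega⟩
  have hE : EArc n 1 n = {(0 : Fin n), 1} := by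
    ext v
    simp only [EArc, Set.mem_setOf_eq, Set.mem_insert_iff, Set.mem_singleton_iff, Fin.ext_iff,
      Fin.val_zero, val_one_of hn]
    have := v.isLt
    omega
  have hne01 : (0 : Fin n) ≠ 1 := by
    intro h
    have := congrArg Fin.val h
    rw [Fin.val_zero, val_one_of hn] at this
    omega
  have hncard : (EArc n 1 n).ncard = 2 := by rw [hE]; exact Set.ncard_pair hne01
  have hforce1 : IsLeakyPsdForcingSet (cycleGraph n) 1 (EArc n 1 n) := forcing01 hn
  have huncard : (Set.univ : Set (Fin n)).ncard = n := by
    rw [Set.ncard_univ, Nat.card_eq_fintype_card, Fintype.card_fin]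
  refine ⟨?_, ?_, ?_⟩
  · apply le_antisymm
    · exact Nat.sInf_le ⟨EArc n 1 n, hncard,
        fun L hf hc => hforce1 L hf (by omega)⟩
    · refine le_csInf ⟨2, EArc n 1 n, hncard,
        fun L hf hc => hforce1 L hf (by omega)⟩ ?_
      rintro k ⟨B, rfl, hB⟩
      exact two_le_ncard_of hn hB
  · apply le_antisymm
    · exact Nat.sInf_le ⟨EArc n 1 n, hncard, hforce1⟩
    · refine le_csInf ⟨2, EArc n 1 n, hncard, hforce1⟩ ?_
      rintro k ⟨B, rfl, hB⟩
      exact two_le_ncard_of hn hB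
  · intro ℓ hℓ
    apply le_antisymm
    · exact Nat.sInf_le ⟨Set.univ, huncard, fun L _ _ => PsdDeriv.refl _⟩
    · refine le_csInf ⟨n, Set.univ, huncard, fun L _ _ => PsdDeriv.refl _⟩ ?_
      rintro k ⟨B, rfl, hB⟩
      rw [eq_univ_of_forcing hn hℓ hB, huncard]
end

section
/- For any graphs G on n vertices and G' on n' vertices, the ℓ-leaky positive semidefinite forcing number of the Cartesian product satisfies Z⁺₍ℓ₎(G □ G') ≤ min(n'·Z⁺₍ℓ₎(G), n·Z⁺₍ℓ₎(G')). -/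
open SimpleGraph Set

variable {V : Type*}

/-- Projection of reachability in an induced subgraph of a box product to the
first coordinate. -/
lemma reach_proj_fst {V V' : Type*} (G : SimpleGraph V) (G' : SimpleGraph V') {C : Set V}
    {S : Set (V × V')} (hS : ∀ x ∈ S, x.1 ∈ Cᶜ) {a b : ↥S}
    (h : ((G.boxProd G').induce S).Reachable a b) :
    (G.induce Cᶜ).Reachable ⟨(a : V × V').1, hS a a.2⟩ ⟨(b : V × V').1, hS b b.2⟩ := by
  obtain ⟨p⟩ := h
  induction p with
  | nil => exact Reachable.refl _
  | cons h p ih =>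
    rename_i x y z
    have hadj : (G.boxProd G').Adj (x : V × V') (y : V × V') := h
    rcases boxProd_adj.mp hadj with ⟨h1, h2⟩ | ⟨h1, h2⟩
    · refine (Adj.reachable ?_).trans ih
      exact h1
    · have : (⟨(x : V × V').1, hS x x.2⟩ : ↥Cᶜ) = ⟨(y : V × V').1, hS y y.2⟩ :=
        Subtype.ext h2
      rw [this]; exact ih

/-- Projection of reachability in an induced subgraph of a box product to the
second coordinate. -/
lemma reach_proj_snd {V V' : Type*} (G : SimpleGraph V) (G' : SimpleGraph V') {C : Set V'}
    {S : Set (V × V')} (hS : ∀ x ∈ S, x.2 ∈ Cᶜ) {a b : ↥S}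
    (h : ((G.boxProd G').induce S).Reachable a b) :
    (G'.induce Cᶜ).Reachable ⟨(a : V × V').2, hS a a.2⟩ ⟨(b : V × V').2, hS b b.2⟩ := by
  obtain ⟨p⟩ := h
  induction p with
  | nil => exact Reachable.refl _
  | cons h p ih =>
    rename_i x y z
    have hadj : (G.boxProd G').Adj (x : V × V') (y : V × V') := h
    rcases boxProd_adj.mp hadj with ⟨h1, h2⟩ | ⟨h1, h2⟩
    · have : (⟨(x : V × V').2, hS x x.2⟩ : ↥Cᶜ) = ⟨(y : V × V').2, hS y y.2⟩ :=
        Subtype.ext h2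
      rw [this]; exact ih
    · refine (Adj.reachable ?_).trans ih
      exact h1

lemma col_forcing_fst {V V' : Type*} [Fintype V'] (G : SimpleGraph V) (G' : SimpleGraph V')
    (ℓ : ℕ) {B : Set V} (hB : IsLeakyPsdForcingSet G ℓ B) :
    IsLeakyPsdForcingSet (G.boxProd G') ℓ (Prod.fst ⁻¹' B) := by
  intro L hLfin hLcard
  have hd := hB (Prod.fst '' L) (hLfin.image _) (le_trans (ncard_image_le hLfin) hLcard)
  suffices h : ∀ C : Set V, PsdDeriv G (Prod.fst '' L) B C →
      PsdDeriv (G.boxProd G') L (Prod.fst ⁻¹' B) (Prod.fst ⁻¹' C) by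
    have := h univ hd
    simpa using this
  intro C hC
  induction hC with
  | refl => exact .refl _
  | @step C' u w hd' hf ih =>
    have key : ∀ S : Finset V', PsdDeriv (G.boxProd G') L (Prod.fst ⁻¹' B)
        (Prod.fst ⁻¹' C' ∪ {x | x.1 = w ∧ x.2 ∈ S}) := by
      classical
      intro S
      induction S using Finset.induction with
      | empty => simpa using ih
      | @insert v' S hv' ih2 =>
        have hforce : PsdForce (G.boxProd G') L
            (Prod.fst ⁻¹' C' ∪ {x | x.1 = w ∧ x.2 ∈ S}) (u, v') (w, v') := by
          refine ⟨Or.inl hf.1, fun hl => hf.2.1 ⟨(u, v'), hl, rfl⟩, ?_,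
            boxProd_adj.mpr (Or.inl ⟨hf.2.2.2.1, rfl⟩), ?_⟩
          · rintro (h | ⟨-, h⟩)
            · exact hf.2.2.1 h
            · exact hv' h
          · rintro ⟨a, b⟩ hadj ⟨hw1, hw2, hr⟩
            have hS : ∀ x ∈ (Prod.fst ⁻¹' C' ∪ {x : V × V' | x.1 = w ∧ x.2 ∈ S})ᶜ,
                x.1 ∈ C'ᶜ := fun x hx hc => hx (Or.inl hc)
            rcases boxProd_adj.mp hadj with ⟨h1, h2⟩ | ⟨h1, h2⟩
            · have haw : a = w := hf.2.2.2.2 a h1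
                ⟨hf.2.2.1, hS _ hw2, reach_proj_fst G G' hS hr⟩
              exact Prod.ext haw h2.symm
            · exact absurd (Or.inl (show ((a, b) : V × V').1 ∈ C' from h2 ▸ hf.1)) hw2
        have := PsdDeriv.step ih2 hforce
        have heq : insert ((w, v') : V × V')
            (Prod.fst ⁻¹' C' ∪ {x | x.1 = w ∧ x.2 ∈ S}) =
            Prod.fst ⁻¹' C' ∪ {x | x.1 = w ∧ x.2 ∈ insert v' S} := by
          ext ⟨a, b⟩
          simp only [Set.mem_insert_iff, Set.mem_union, Set.mem_preimage, Set.mem_setOf_eq,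
            Finset.mem_insert, Prod.mk.injEq]
          tauto
        rwa [heq] at this
    have := key Finset.univ
    have heq : (Prod.fst ⁻¹' C' ∪ {x : V × V' | x.1 = w ∧ x.2 ∈ (Finset.univ : Finset V')}) =
        Prod.fst ⁻¹' insert w C' := by
      ext ⟨a, b⟩
      simp only [Set.mem_union, Set.mem_preimage, Set.mem_setOf_eq, Finset.mem_univ, and_true,
        Set.mem_insert_iff]
      tauto
    rwa [heq] at this

lemma col_forcing_snd {V V' : Type*} [Fintype V] (G : SimpleGraph V) (G' : SimpleGraph V')
    (ℓ : ℕ) {B : Set V'} (hB : IsLeakyPsdForcingSet G' ℓ B) :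
    IsLeakyPsdForcingSet (G.boxProd G') ℓ (Prod.snd ⁻¹' B) := by
  intro L hLfin hLcard
  have hd := hB (Prod.snd '' L) (hLfin.image _) (le_trans (ncard_image_le hLfin) hLcard)
  suffices h : ∀ C : Set V', PsdDeriv G' (Prod.snd '' L) B C →
      PsdDeriv (G.boxProd G') L (Prod.snd ⁻¹' B) (Prod.snd ⁻¹' C) by
    have := h univ hd
    simpa using this
  intro C hC
  induction hC with
  | refl => exact .refl _
  | @step C' u w hd' hf ih =>
    have key : ∀ S : Finset V, PsdDeriv (G.boxProd G') L (Prod.snd ⁻¹' B)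
        (Prod.snd ⁻¹' C' ∪ {x | x.2 = w ∧ x.1 ∈ S}) := by
      classical
      intro S
      induction S using Finset.induction with
      | empty => simpa using ih
      | @insert v' S hv' ih2 =>
        have hforce : PsdForce (G.boxProd G') L
            (Prod.snd ⁻¹' C' ∪ {x | x.2 = w ∧ x.1 ∈ S}) (v', u) (v', w) := by
          refine ⟨Or.inl hf.1, fun hl => hf.2.1 ⟨(v', u), hl, rfl⟩, ?_,
            boxProd_adj.mpr (Or.inr ⟨hf.2.2.2.1, rfl⟩), ?_⟩
          · rintro (h | ⟨-, h⟩)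
            · exact hf.2.2.1 h
            · exact hv' h
          · rintro ⟨a, b⟩ hadj ⟨hw1, hw2, hr⟩
            have hS : ∀ x ∈ (Prod.snd ⁻¹' C' ∪ {x : V × V' | x.2 = w ∧ x.1 ∈ S})ᶜ,
                x.2 ∈ C'ᶜ := fun x hx hc => hx (Or.inl hc)
            rcases boxProd_adj.mp hadj with ⟨h1, h2⟩ | ⟨h1, h2⟩
            · exact absurd (Or.inl (show ((a, b) : V × V').2 ∈ C' from h2 ▸ hf.1)) hw2
            · have hbw : b = w := hf.2.2.2.2 b h1
                ⟨hf.2.2.1, hS _ hw2, reach_proj_snd G G' hS hr⟩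
              exact Prod.ext h2.symm hbw
        have := PsdDeriv.step ih2 hforce
        have heq : insert ((v', w) : V × V')
            (Prod.snd ⁻¹' C' ∪ {x | x.2 = w ∧ x.1 ∈ S}) =
            Prod.snd ⁻¹' C' ∪ {x | x.2 = w ∧ x.1 ∈ insert v' S} := by
          ext ⟨a, b⟩
          simp only [Set.mem_insert_iff, Set.mem_union, Set.mem_preimage, Set.mem_setOf_eq,
            Finset.mem_insert, Prod.mk.injEq]
          tauto
        rwa [heq] at this
    have := key Finset.univ
    have heq : (Prod.snd ⁻¹' C' ∪ {x : V × V' | x.2 = w ∧ x.1 ∈ (Finset.univ : Finset V)}) =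
        Prod.snd ⁻¹' insert w C' := by
      ext ⟨a, b⟩
      simp only [Set.mem_union, Set.mem_preimage, Set.mem_setOf_eq, Finset.mem_univ, and_true,
        Set.mem_insert_iff]
      tauto
    rwa [heq] at this

lemma ncard_preimage_fst {V V' : Type*} [Fintype V'] (B : Set V) :
    (Prod.fst ⁻¹' B : Set (V × V')).ncard = Fintype.card V' * B.ncard := by
  have h : (Prod.fst ⁻¹' B : Set (V × V')) = B ×ˢ (univ : Set V') := by
    ext x; simp
  rw [h, ← Nat.card_coe_set_eq, Nat.card_congr (Equiv.Set.prod B univ), Nat.card_prod,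
    Nat.card_coe_set_eq, Nat.card_coe_set_eq, Set.ncard_univ,
    Nat.card_eq_fintype_card, mul_comm]

lemma ncard_preimage_snd {V V' : Type*} [Fintype V] (B : Set V') :
    (Prod.snd ⁻¹' B : Set (V × V')).ncard = Fintype.card V * B.ncard := by
  have h : (Prod.snd ⁻¹' B : Set (V × V')) = (univ : Set V) ×ˢ B := by
    ext x; simp
  rw [h, ← Nat.card_coe_set_eq, Nat.card_congr (Equiv.Set.prod univ B), Nat.card_prod,
    Nat.card_coe_set_eq, Nat.card_coe_set_eq, Set.ncard_univ,
    Nat.card_eq_fintype_card]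

lemma leakyPsdNum_mem {W : Type*} [Fintype W] (G : SimpleGraph W) (ℓ : ℕ) :
    ∃ B : Set W, B.ncard = leakyPsdNum G ℓ ∧ IsLeakyPsdForcingSet G ℓ B := by
  have hne : {k | ∃ B : Set W, B.ncard = k ∧ IsLeakyPsdForcingSet G ℓ B}.Nonempty :=
    ⟨(univ : Set W).ncard, univ, rfl, fun L _ _ => PsdDeriv.refl _⟩
  exact Nat.sInf_mem hne

/-- `Z⁺₍ℓ₎(G □ G') ≤ min(n'·Z⁺₍ℓ₎(G), n·Z⁺₍ℓ₎(G'))`. -/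
theorem leakyPsdNum_boxProd {V' : Type*} [Fintype V] [Fintype V']
    (G : SimpleGraph V) (G' : SimpleGraph V') (ℓ : ℕ) :
    leakyPsdNum (G.boxProd G') ℓ ≤
      min (Fintype.card V' * leakyPsdNum G ℓ)
        (Fintype.card V * leakyPsdNum G' ℓ) := by
  refine le_min ?_ ?_
  · obtain ⟨B, hBcard, hBforce⟩ := leakyPsdNum_mem G ℓ
    exact Nat.sInf_le ⟨Prod.fst ⁻¹' B, by rw [ncard_preimage_fst, hBcard],
      col_forcing_fst G G' ℓ hBforce⟩
  · obtain ⟨B, hBcard, hBforce⟩ := leakyPsdNum_mem G' ℓ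
    exact Nat.sInf_le ⟨Prod.snd ⁻¹' B, by rw [ncard_preimage_snd, hBcard],
      col_forcing_snd G G' ℓ hBforce⟩
end

section
/- For the d-dimensional hypercube Q_d, Z⁺₍ℓ₎(Q_d) = 2^{d−1} for all 0 ≤ ℓ ≤ d − 1, and Z⁺₍ℓ₎(Q_d) = 2^d for all d ≤ ℓ ≤ 2^d. -/
open SimpleGraph Set

variable {V : Type*}

/-- The `d`-dimensional hypercube: vertices are `0/1`-vectors of length `d`,
adjacent iff they differ in exactly one coordinate. -/
def hypercube (d : ℕ) : SimpleGraph (Fin d → Bool) where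
  Adj x y := ∃! i, x i ≠ y i
  symm := by
    constructor
    rintro x y ⟨i, hi, hu⟩
    exact ⟨i, hi.symm, fun j hj => hu j hj.symm⟩
  loopless := by
    constructor
    rintro x ⟨i, hi, -⟩
    exact hi rfl

/-! ### Auxiliary development -/

namespace LeakyAux

variable {d : ℕ}

abbrev Vt (d : ℕ) := Fin d → Bool

/-- parity of a 0/1-vector -/
def par (x : Vt d) : ZMod 2 := ∑ j, if x j then 1 else 0

/-- flip coordinate `i` -/
def flp (x : Vt d) (i : Fin d) : Vt d := Function.update x i (!x i)

lemma flp_apply_self (x : Vt d) (i : Fin d) : flp x i i = !x i := by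
  simp [flp]

lemma flp_apply_ne (x : Vt d) {i j : Fin d} (h : j ≠ i) : flp x i j = x j := by
  simp [flp, Function.update_of_ne h]

lemma flp_flp (x : Vt d) (i : Fin d) : flp (flp x i) i = x := by
  funext j
  by_cases h : j = i
  · subst h; simp [flp]
  · simp [flp, Function.update_of_ne h]

lemma flp_inj {x : Vt d} {i j : Fin d} (h : flp x i = flp x j) : i = j := by
  by_contra hne
  have := congrFun h i
  rw [flp_apply_self, flp_apply_ne x hne] at this
  cases x i <;> simp at this

lemma flp_left_inj {x y : Vt d} {i : Fin d} (h : flp x i = flp y i) : x = y := by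
  have := congrArg (fun z => flp z i) h
  simpa [flp_flp] using this

lemma par_flp (x : Vt d) (i : Fin d) : par (flp x i) = par x + 1 := by
  classical
  have h1 : (fun j => if flp x i j then (1 : ZMod 2) else 0)
      = Function.update (fun j => if x j then (1 : ZMod 2) else 0) i
        (if !x i then (1 : ZMod 2) else 0) := by
    funext j
    by_cases h : j = i
    · subst h; simp [flp]
    · simp [flp, Function.update_of_ne h]
  have h2 : par (flp x i) = (if !x i then (1 : ZMod 2) else 0)
      + ∑ j ∈ Finset.univ \ {i}, (if x j then (1 : ZMod 2) else 0) := by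
    rw [par]
    rw [show (∑ j, if flp x i j then (1 : ZMod 2) else 0)
        = ∑ j, Function.update (fun j => if x j then (1 : ZMod 2) else 0) i
          (if !x i then (1 : ZMod 2) else 0) j from by rw [← h1]]
    rw [Finset.sum_update_of_mem (Finset.mem_univ i)]
  have h3 : par x = (if x i then (1 : ZMod 2) else 0)
      + ∑ j ∈ Finset.univ \ {i}, (if x j then (1 : ZMod 2) else 0) := by
    rw [par, Finset.sum_eq_add_sum_sdiff_singleton_of_mem (Finset.mem_univ i) (fun j => if x j then (1 : ZMod 2) else 0)]
  have key : (if !x i then (1 : ZMod 2) else 0) = (if x i then (1 : ZMod 2) else 0) + 1 := by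
    cases hxi : x i <;> simp <;> decide
  rw [h2, h3, key]; ring

lemma adj_iff {x y : Vt d} : (hypercube d).Adj x y ↔ ∃ i, y = flp x i := by
  constructor
  · rintro ⟨i, hi, hu⟩
    refine ⟨i, funext fun j => ?_⟩
    by_cases h : j = i
    · subst h
      rw [flp_apply_self]
      cases hxy : x j <;> cases hy : y j <;> simp_all
    · rw [flp_apply_ne x h]
      by_contra hne
      exact h (hu j (Ne.symm hne))
  · rintro ⟨i, rfl⟩
    refine ⟨i, ?_, fun j hj => ?_⟩
    · show x i ≠ flp x i i
      rw [flp_apply_self]; cases x i <;> simp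
    · have hj' : x j ≠ flp x i j := hj
      by_contra h
      rw [flp_apply_ne x h] at hj'
      exact hj' rfl

lemma adj_par {x y : Vt d} (h : (hypercube d).Adj x y) : par y = par x + 1 := by
  obtain ⟨i, rfl⟩ := adj_iff.1 h
  exact par_flp x i

lemma zmod2_cases (z : ZMod 2) : z = 0 ∨ z = 1 := by revert z; decide

/-- sign used in the orthogonal representation -/
def sgn (x : Vt d) (i : Fin d) : ℝ := ∏ j ∈ Finset.Iio i, (if x j then (-1 : ℝ) else 1)

lemma sgn_ne_zero (x : Vt d) (i : Fin d) : sgn x i ≠ 0 := by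
  refine Finset.prod_ne_zero_iff.2 fun j _ => ?_
  cases x j <;> norm_num

/-- the vector attached to vertex `u` (a function supported on even vertices) -/
def pv (u : Vt d) : Vt d → ℝ :=
  if par u = 0 then (fun e => if e = u then 1 else 0)
  else (fun e => ∑ i, if e = flp u i then sgn u i else 0)

lemma pv_even {u : Vt d} (hu : par u = 0) (e : Vt d) :
    pv u e = if e = u then 1 else 0 := by simp [pv, hu]

lemma pv_odd {u : Vt d} (hu : par u ≠ 0) (e : Vt d) :
    pv u e = ∑ i, if e = flp u i then sgn u i else 0 := by simp [pv, hu]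

/-- `pv u` is supported on even vertices -/
lemma pv_support {u e : Vt d} (he : par e ≠ 0) : pv u e = 0 := by
  rcases zmod2_cases (par u) with hu | hu
  · rw [pv_even hu]
    simp only [ite_eq_right_iff]
    intro h; subst h; exact absurd hu he
  · rw [pv_odd (by rw [hu]; decide)]
    refine Finset.sum_eq_zero fun i _ => ?_
    simp only [ite_eq_right_iff]
    intro h; subst h
    rw [par_flp, hu] at he
    exact absurd (by decide : (1 : ZMod 2) + 1 = 0) he

/-- the Gram matrix -/
def M (u v : Vt d) : ℝ := ∑ e, pv u e * pv v e

lemma swap_flp {u v : Vt d} {i j : Fin d} (hij : flp u i = flp v j) (hne : i ≠ j) :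
    flp u j = flp v i := by
  have hvi : v i = !u i := by
    have h1 := congrFun hij i
    rw [flp_apply_self, flp_apply_ne v hne] at h1
    exact h1.symm
  have hvj : v j = !u j := by
    have h1 := congrFun hij j
    rw [flp_apply_ne u (Ne.symm hne), flp_apply_self] at h1
    rw [h1, Bool.not_not]
  have hvk : ∀ k, k ≠ i → k ≠ j → v k = u k := by
    intro k hki hkj
    have h1 := congrFun hij k
    rw [flp_apply_ne u hki, flp_apply_ne v hkj] at h1
    exact h1.symm
  funext k
  by_cases hkj : k = j
  · subst hkj
    rw [flp_apply_self, flp_apply_ne v (fun h => hne h.symm), hvj]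
  · by_cases hki : k = i
    · subst hki
      rw [flp_apply_ne u hkj, flp_apply_self, hvi]
      cases u k <;> rfl
    · rw [flp_apply_ne u hkj, flp_apply_ne v hki]
      exact (hvk k hki hkj).symm

lemma sgn_swap_aux {u v : Vt d} {i j : Fin d} (hij : flp u i = flp v j) (hlt : i < j) :
    sgn u i * sgn v j + sgn u j * sgn v i = 0 := by
  have hne : i ≠ j := ne_of_lt hlt
  have hvu : ∀ k, k ≠ i → k ≠ j → v k = u k := by
    intro k hki hkj
    have h1 := congrFun hij k
    rw [flp_apply_ne u hki, flp_apply_ne v hkj] at h1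
    exact h1.symm
  have hvi : v i = !u i := by
    have h1 := congrFun hij i
    rw [flp_apply_self, flp_apply_ne v hne] at h1
    exact h1.symm
  have e1 : sgn v i = sgn u i := by
    refine Finset.prod_congr rfl fun k hk => ?_
    have hk' := Finset.mem_Iio.1 hk
    rw [hvu k (ne_of_lt hk') (ne_of_lt (hk'.trans hlt))]
  have e2 : sgn v j = -sgn u j := by
    have hiIio : i ∈ Finset.Iio j := Finset.mem_Iio.2 hlt
    rw [sgn, sgn, ← Finset.mul_prod_erase _ _ hiIio, ← Finset.mul_prod_erase _ _ hiIio]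
    have erest : ∏ k ∈ (Finset.Iio j).erase i, (if v k then (-1:ℝ) else 1)
        = ∏ k ∈ (Finset.Iio j).erase i, (if u k then (-1:ℝ) else 1) := by
      refine Finset.prod_congr rfl fun k hk => ?_
      obtain ⟨hki, hkj⟩ := Finset.mem_erase.1 hk
      rw [hvu k hki (ne_of_lt (Finset.mem_Iio.1 hkj))]
    rw [erest, hvi]
    cases u i <;> simp
  rw [e1, e2]; ring

lemma sgn_swap {u v : Vt d} {i j : Fin d} (hij : flp u i = flp v j) (hne : i ≠ j) :
    sgn u i * sgn v j + sgn u j * sgn v i = 0 := by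
  rcases hne.lt_or_gt with h | h
  · exact sgn_swap_aux hij h
  · have := sgn_swap_aux (u := v) (v := u) (i := j) (j := i) (by rw [← hij]) h
    linarith

lemma M_even_left {u v : Vt d} (hu : par u = 0) : M u v = pv v u := by
  rw [M]
  rw [show (∑ e, pv u e * pv v e) = ∑ e, (if e = u then pv v e else 0) from
    Finset.sum_congr rfl fun e _ => by
      by_cases h1 : e = u <;> simp [pv_even hu, h1]]
  simp

lemma M_even_right {u v : Vt d} (hv : par v = 0) : M u v = pv u v := by
  rw [M]
  rw [show (∑ e, pv u e * pv v e) = ∑ e, (if e = v then pv u e else 0) from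
    Finset.sum_congr rfl fun e _ => by
      by_cases h1 : e = v <;> simp [pv_even hv, h1]]
  simp

lemma pv_odd_adj {u v : Vt d} (hu : par u ≠ 0) (h : (hypercube d).Adj u v) : pv u v ≠ 0 := by
  rw [pv_odd hu]
  obtain ⟨i0, hi0⟩ := adj_iff.1 h
  rw [Finset.sum_eq_single i0]
  · rw [if_pos hi0]; exact sgn_ne_zero u i0
  · intro i _ hii0
    rw [if_neg]
    intro hcon
    exact hii0 (flp_inj (x := u) (by rw [← hcon, ← hi0]))
  · intro hcon; exact absurd (Finset.mem_univ i0) hcon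

lemma pv_odd_nonadj {u v : Vt d} (hu : par u ≠ 0) (h : ¬ (hypercube d).Adj u v) :
    pv u v = 0 := by
  rw [pv_odd hu]
  refine Finset.sum_eq_zero fun i _ => ?_
  rw [if_neg]
  intro hcon
  exact h (adj_iff.2 ⟨i, hcon⟩)

lemma M_adj {u v : Vt d} (h : (hypercube d).Adj u v) : M u v ≠ 0 := by
  have hpar := adj_par h
  rcases zmod2_cases (par u) with hu | hu
  · have hv : par v ≠ 0 := by rw [hpar, hu]; decide
    rw [M_even_left hu]
    exact pv_odd_adj hv h.symm
  · have hv : par v = 0 := by rw [hpar, hu]; decide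
    have hu' : par u ≠ 0 := by rw [hu]; decide
    rw [M_even_right hv]
    exact pv_odd_adj hu' h

lemma M_nonadj {u v : Vt d} (hne : u ≠ v) (h : ¬ (hypercube d).Adj u v) : M u v = 0 := by
  rcases zmod2_cases (par u) with hu | hu <;> rcases zmod2_cases (par v) with hv | hv
  · -- both even
    rw [M_even_left hu, pv_even hv, if_neg hne]
  · -- u even, v odd
    rw [M_even_left hu]
    exact pv_odd_nonadj (by rw [hv]; decide) (fun hc => h hc.symm)
  · -- u odd, v even
    rw [M_even_right hv]
    exact pv_odd_nonadj (by rw [hu]; decide) h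
  · -- both odd
    have hu' : par u ≠ 0 := by rw [hu]; decide
    have hv' : par v ≠ 0 := by rw [hv]; decide
    have expand : M u v
        = ∑ x ∈ (Finset.univ ×ˢ Finset.univ : Finset (Fin d × Fin d)),
            (if flp u x.1 = flp v x.2 then sgn u x.1 * sgn v x.2 else 0) := by
      rw [M, Finset.sum_product]
      have step1 : ∀ e : Vt d, pv u e * pv v e
          = ∑ i, ∑ j, (if e = flp u i then sgn u i else 0) * (if e = flp v j then sgn v j else 0) := by
        intro e
        rw [pv_odd hu' e, pv_odd hv' e, Finset.sum_mul_sum]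
      rw [Finset.sum_congr rfl fun e _ => step1 e]
      rw [Finset.sum_comm]
      refine Finset.sum_congr rfl fun i _ => ?_
      rw [Finset.sum_comm]
      refine Finset.sum_congr rfl fun j _ => ?_
      rw [show (∑ e, (if e = flp u i then sgn u i else 0) * (if e = flp v j then sgn v j else 0))
          = ∑ e, (if e = flp u i then (if flp u i = flp v j then sgn u i * sgn v j else 0) else 0) from
        Finset.sum_congr rfl fun e _ => by
          by_cases h1 : e = flp u i
          · rw [if_pos h1, h1]
            by_cases h2 : flp u i = flp v j <;> simp [h2]
          · rw [if_neg h1, if_neg h1, zero_mul]]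
      simp
    rw [expand]
    refine Finset.sum_ninvolution (fun x => (x.2, x.1)) ?_ ?_ (fun x => Finset.mem_univ _) ?_
    · rintro ⟨i, j⟩
      simp only
      by_cases hc : flp u i = flp v j
      · have hijne : i ≠ j := by
          rintro rfl
          exact hne (flp_left_inj hc)
        rw [if_pos hc, if_pos (swap_flp hc hijne)]
        exact sgn_swap hc hijne
      · rw [if_neg hc, if_neg, add_zero]
        intro hc2
        have hijne : j ≠ i := by
          rintro rfl
          exact hne (flp_left_inj hc2)
        exact hc (swap_flp hc2 hijne)
    · rintro ⟨i, j⟩ hne0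
      have hijne : i ≠ j := by
        rintro rfl
        apply hne0
        rw [if_neg]
        intro hc
        exact hne (flp_left_inj hc)
      simp only [ne_eq, Prod.mk.injEq, not_and]
      exact fun _ h3 => hijne h3
    · intro x; rfl

lemma sameComp_step {V : Type*} {G : SimpleGraph V} {C : Set V} {w u v : V}
    (h : SameComp G C w u) (hadj : G.Adj u v) (hv : v ∉ C) : SameComp G C w v := by
  obtain ⟨h1, h2, r⟩ := h
  refine ⟨h1, hv, r.trans (SimpleGraph.Adj.reachable ?_)⟩
  show G.Adj u v
  exact hadj

lemma sameComp_notmem {V : Type*} {G : SimpleGraph V} {C : Set V} {w v : V}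
    (h : SameComp G C w v) : v ∉ C := by
  obtain ⟨-, h2, -⟩ := h
  exact h2

/-- Main lower-bound engine: a vector in the kernel of the Gram matrix that vanishes
on the initial blue set vanishes on every derived set. -/
lemma vanish_of_deriv {L B C : Set (Vt d)} (hder : PsdDeriv (hypercube d) L B C)
    (x : Vt d → ℝ) (hq : ∀ e, (∑ u, x u * pv u e) = 0)
    (hB : ∀ b ∈ B, x b = 0) : ∀ c ∈ C, x c = 0 := by
  induction hder with
  | refl => exact hB
  | @step C' u w hprev hf ih =>
    obtain ⟨huC, -, hwC, huw, huniq⟩ := hf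
    intro c hc
    rcases Set.mem_insert_iff.1 hc with hcw | hcC
    swap
    · exact ih c hcC
    obtain rfl : w = c := hcw.symm
    -- now c = w ; show x w = 0
    classical
    set W : Set (Vt d) := {v | SameComp (hypercube d) C' w v} with hWdef
    set y : Vt d → ℝ := fun v => if v ∈ W then x v else 0 with hydef
    set z : Vt d → ℝ := fun v => x v - y v with hzdef
    have hwW : w ∈ W := ⟨hwC, hwC, SimpleGraph.Reachable.refl _⟩
    have hWnotC : ∀ v ∈ W, v ∉ C' := fun v hv => sameComp_notmem hv
    have hstep : ∀ v' ∈ W, ∀ v, (hypercube d).Adj v' v → v ∉ C' → v ∈ W :=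
      fun v' hv' v hadj hv => sameComp_step hv' hadj hv
    have key0 : ∀ u' v : Vt d, y u' * z v * M u' v = 0 := by
      intro u' v
      by_cases hyu : y u' = 0
      · rw [hyu, zero_mul, zero_mul]
      by_cases hzv : z v = 0
      · rw [hzv, mul_zero, zero_mul]
      have huW : u' ∈ W := by
        by_contra hh
        exact hyu (by rw [hydef]; simp [hh])
      have hvW : v ∉ W := by
        intro hh
        exact hzv (by rw [hzdef, hydef]; simp [hh])
      have hvC : v ∉ C' := by
        intro hh
        refine hzv ?_
        have hx0 : x v = 0 := ih v hh
        have hy0 : y v = 0 := by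
          rw [hydef]; simp only [if_neg hvW]
        rw [hzdef]; simp [hx0, hy0]
      have hMuv : M u' v = 0 := by
        apply M_nonadj
        · rintro rfl; exact hvW huW
        · intro hadj; exact hvW (hstep u' huW v hadj hvC)
      rw [hMuv, mul_zero]
    have hsum : (∑ e, (∑ u', y u' * pv u' e) * (∑ v, z v * pv v e)) = 0 := by
      calc ∑ e, (∑ u', y u' * pv u' e) * (∑ v, z v * pv v e)
          = ∑ e, ∑ u', ∑ v, (y u' * pv u' e) * (z v * pv v e) := by
            exact Finset.sum_congr rfl fun e _ => Finset.sum_mul_sum _ _ _ _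
        _ = ∑ u', ∑ v, ∑ e, (y u' * pv u' e) * (z v * pv v e) := by
            rw [Finset.sum_comm]
            exact Finset.sum_congr rfl fun u' _ => Finset.sum_comm
        _ = ∑ u', ∑ v, y u' * z v * M u' v := by
            refine Finset.sum_congr rfl fun u' _ => Finset.sum_congr rfl fun v _ => ?_
            rw [M, Finset.mul_sum]
            exact Finset.sum_congr rfl fun e _ => by ring
        _ = 0 :=
            Finset.sum_eq_zero fun u' _ => Finset.sum_eq_zero fun v _ => key0 u' v
    have hyz : ∀ e, (∑ v, z v * pv v e) = -(∑ u', y u' * pv u' e) := by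
      intro e
      have hsplit : (∑ u', y u' * pv u' e) + (∑ u', z u' * pv u' e) = 0 := by
        rw [← Finset.sum_add_distrib]
        rw [show (∑ u', (y u' * pv u' e + z u' * pv u' e)) = ∑ u', x u' * pv u' e from
          Finset.sum_congr rfl fun u' _ => by rw [hzdef]; ring]
        exact hq e
      linarith
    have hQy2 : (∑ e, (∑ u', y u' * pv u' e) * (∑ u', y u' * pv u' e)) = 0 := by
      have : (∑ e, (∑ u', y u' * pv u' e) * (∑ u', y u' * pv u' e))
          = -(∑ e, (∑ u', y u' * pv u' e) * (∑ v, z v * pv v e)) := by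
        rw [← Finset.sum_neg_distrib]
        refine Finset.sum_congr rfl fun e _ => ?_
        rw [hyz e]; ring
      rw [this, hsum, neg_zero]
    have hQy0 : ∀ e, (∑ u', y u' * pv u' e) = 0 := by
      have h' := (Finset.sum_eq_zero_iff_of_nonneg
        (fun e _ => mul_self_nonneg (∑ u', y u' * pv u' e))).1 hQy2
      exact fun e => mul_self_eq_zero.1 (h' e (Finset.mem_univ e))
    have hfin : (∑ v, y v * M u v) = 0 := by
      have h1 : ∀ v, y v * M u v = ∑ e, (y v * pv v e) * pv u e := by
        intro v
        rw [M, Finset.mul_sum]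
        exact Finset.sum_congr rfl fun e _ => by ring
      rw [Finset.sum_congr rfl fun v _ => h1 v, Finset.sum_comm]
      refine Finset.sum_eq_zero fun e _ => ?_
      rw [← Finset.sum_mul, hQy0 e, zero_mul]
    have hsingle : (∑ v, y v * M u v) = y w * M u w := by
      refine Finset.sum_eq_single w (fun v _ hvw => ?_) (fun h => absurd (Finset.mem_univ w) h)
      by_cases hyv : y v = 0
      · rw [hyv, zero_mul]
      have hvW : v ∈ W := by
        by_contra hh
        exact hyv (by rw [hydef]; simp [hh])
      have hMuv : M u v = 0 := by
        apply M_nonadj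
        · rintro rfl; exact (hWnotC _ hvW) huC
        · intro hadj
          exact hvw (huniq v hadj hvW)
      rw [hMuv, mul_zero]
    have : y w * M u w = 0 := by rw [← hsingle, hfin]
    have hyw : y w = x w := by rw [hydef]; simp [hwW]
    rcases mul_eq_zero.1 this with h' | h'
    · rw [← hyw]; exact h'
    · exact absurd h' (M_adj huw)

lemma card_univ_vt : Fintype.card (Vt d) = 2 ^ d := by
  rw [Fintype.card_fun]
  simp

def evens (d : ℕ) : Set (Vt d) := {x | par x = 0}

lemma ncard_evens : (evens d).ncard = 2 ^ (d - 1) := by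
  classical
  rcases Nat.eq_zero_or_pos d with hd | hd
  · subst hd
    have h1 : evens 0 = Set.univ := by
      ext x
      simp [evens, par]
    rw [h1, Set.ncard_univ, Nat.card_eq_fintype_card, card_univ_vt]
  · have i0 : Fin d := ⟨0, hd⟩
    set E := Finset.univ.filter (fun x : Vt d => par x = 0) with hE
    have hEO : E.card + (Finset.univ.filter (fun x : Vt d => ¬ par x = 0)).card
        = 2 ^ d := by
      rw [hE, Finset.card_filter_add_card_filter_not, ← card_univ_vt]
      rfl
    have hcard : E.card = (Finset.univ.filter (fun x : Vt d => ¬ par x = 0)).card := by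
      refine Finset.card_bij (fun x _ => flp x i0) ?_ ?_ ?_
      · intro a ha
        rw [Finset.mem_filter]
        refine ⟨Finset.mem_univ _, ?_⟩
        rw [par_flp, (Finset.mem_filter.1 ha).2]
        decide
      · intro a _ b _ hab
        exact flp_left_inj hab
      · intro b hb
        refine ⟨flp b i0, ?_, (flp_flp b i0)⟩
        rw [hE, Finset.mem_filter]
        refine ⟨Finset.mem_univ _, ?_⟩
        rw [par_flp]
        rcases zmod2_cases (par b) with h | h
        · exact absurd h (Finset.mem_filter.1 hb).2
        · rw [h]; decide
      
    have hpow : 2 ^ d = 2 ^ (d - 1) * 2 := by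
      rw [← pow_succ]
      congr 1
      omega
    have hcardE : E.card = 2 ^ (d - 1) := by omega
    have hfin : (evens d).toFinset = E := by
      ext x
      rw [Set.mem_toFinset]; simp [evens, hE]
    rw [Set.ncard_eq_toFinset_card', hfin, hcardE]

lemma exists_kernel_vec {B : Set (Vt d)} (hB : B.ncard < 2 ^ (d - 1)) (hd : 0 < d) :
    ∃ x : Vt d → ℝ, x ≠ 0 ∧ (∀ b ∈ B, x b = 0) ∧ ∀ e, (∑ u, x u * pv u e) = 0 := by
  classical
  haveI : Fintype ↥B := (Set.toFinite B).fintype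
  haveI : Fintype ↥(evens d) := (Set.toFinite (evens d)).fintype
  let Ψ₂ : (Vt d → ℝ) →ₗ[ℝ] (↥(evens d) → ℝ) :=
    { toFun := fun x => fun e => ∑ u, x u * pv u (e : Vt d)
      map_add' := by
        intro a b
        funext e
        simp [add_mul, Finset.sum_add_distrib]
      map_smul' := by
        intro c a
        funext e
        simp [Finset.mul_sum, mul_assoc] }
  let Ψ := LinearMap.prod (LinearMap.funLeft ℝ ℝ (Subtype.val : ↥B → Vt d)) Ψ₂
  have hni : ¬ Function.Injective Ψ := by
    intro hinj
    have hle := LinearMap.finrank_le_finrank_of_injective hinj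
    rw [Module.finrank_fintype_fun_eq_card, card_univ_vt] at hle
    have h2 : Module.finrank ℝ ((↥B → ℝ) × (↥(evens d) → ℝ))
        = B.ncard + 2 ^ (d - 1) := by
      rw [Module.finrank_prod, Module.finrank_fintype_fun_eq_card,
        Module.finrank_fintype_fun_eq_card]
      congr 1
      · rw [← Nat.card_coe_set_eq, Nat.card_eq_fintype_card]
      · rw [← ncard_evens, ← Nat.card_coe_set_eq, Nat.card_eq_fintype_card]
    rw [h2] at hle
    have hpow : 2 ^ d = 2 ^ (d - 1) * 2 := by
      rw [← pow_succ]
      congr 1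
      omega
    omega
  rw [← LinearMap.ker_eq_bot] at hni
  obtain ⟨x, hxker, hx0⟩ := Submodule.exists_mem_ne_zero_of_ne_bot hni
  have hΨ : Ψ x = 0 := hxker
  have hfst : (fun b : ↥B => x (b : Vt d)) = 0 := congrArg Prod.fst hΨ
  have hsnd : (fun e : ↥(evens d) => ∑ u, x u * pv u (e : Vt d)) = 0 := congrArg Prod.snd hΨ
  refine ⟨x, hx0, ?_, ?_⟩
  · intro b hb
    exact congrFun hfst ⟨b, hb⟩
  · intro e
    rcases zmod2_cases (par e) with he | he
    · exact congrFun hsnd ⟨e, he⟩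
    · refine Finset.sum_eq_zero fun u _ => ?_
      rw [pv_support (by rw [he]; decide), mul_zero]

lemma forcing_lower {B : Set (Vt d)} {ℓ : ℕ} (h : IsLeakyPsdForcingSet (hypercube d) ℓ B) :
    2 ^ (d - 1) ≤ B.ncard := by
  have hder := h ∅ Set.finite_empty (by simp)
  rcases Nat.eq_zero_or_pos d with hd | hd
  · subst hd
    show 2 ^ (0 - 1) ≤ B.ncard
    by_contra hcon
    push_neg at hcon
    have hB0 : B = ∅ := by
      refine (Set.ncard_eq_zero (Set.toFinite B)).1 ?_
      omega
    rw [hB0] at hder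
    have hempty : ∀ C : Set (Vt 0), PsdDeriv (hypercube 0) ∅ ∅ C → C = ∅ := by
      intro C hC
      induction hC with
      | refl => rfl
      | step hprev hf ih =>
        exact absurd (ih ▸ hf.1) (Set.notMem_empty _)
    have huniv : (Set.univ : Set (Vt 0)) = ∅ := hempty _ hder
    have : (fun _ => false : Vt 0) ∈ (Set.univ : Set (Vt 0)) := Set.mem_univ _
    rw [huniv] at this
    exact Set.notMem_empty _ this
  · by_contra hcon
    push_neg at hcon
    obtain ⟨x, hx0, hxB, hq⟩ := exists_kernel_vec hcon hd
    have hvan := vanish_of_deriv hder x hq hxB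
    exact hx0 (funext fun v => hvan v (Set.mem_univ v))

lemma deriv_univ {V' : Type*} [Fintype V'] {G : SimpleGraph V'} {L B : Set V'}
    (h : ∀ C : Set V', B ⊆ C → C ≠ Set.univ → ∃ u w, PsdForce G L C u w) :
    PsdDeriv G L B Set.univ := by
  suffices H : ∀ n (C : Set V'), Cᶜ.ncard ≤ n → B ⊆ C → PsdDeriv G L B C →
      PsdDeriv G L B Set.univ from
    H (Bᶜ.ncard) B le_rfl (subset_refl B) (PsdDeriv.refl B)
  intro n
  induction n with
  | zero =>
    intro C hc hBC hder
    have h1 : Cᶜ = ∅ := (Set.ncard_eq_zero (Set.toFinite _)).1 (Nat.le_zero.1 hc)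
    have hCu : C = Set.univ := by rwa [Set.compl_empty_iff] at h1
    rwa [hCu] at hder
  | succ n ihn =>
    intro C hc hBC hder
    by_cases hCu : C = Set.univ
    · rwa [hCu] at hder
    obtain ⟨u, w, hf⟩ := h C hBC hCu
    have hw : w ∉ C := hf.2.2.1
    refine ihn (insert w C) ?_ (hBC.trans (Set.subset_insert w C)) (hder.step hf)
    have h1 : (insert w C)ᶜ = Cᶜ \ {w} := by
      ext a
      simp [Set.mem_insert_iff, and_comm, or_comm]
    rw [h1, Set.ncard_diff_singleton_of_mem (Set.mem_compl hw)]
    omega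

lemma reach_eq_of_no_adj {X : Type*} {H : SimpleGraph X} (hE : ∀ a b, ¬ H.Adj a b)
    {a b : X} (h : H.Reachable a b) : a = b := by
  obtain ⟨p⟩ := h
  cases p with
  | nil => rfl
  | cons hadj _ => exact absurd hadj (hE _ _)

lemma evens_forcing {ℓ : ℕ} (hl : ℓ ≤ d - 1) :
    IsLeakyPsdForcingSet (hypercube d) ℓ (evens d) := by
  intro L hLfin hLcard
  refine deriv_univ ?_
  intro C hBC hCu
  obtain ⟨w, hw⟩ := (Set.ne_univ_iff_exists_notMem C).1 hCu
  have hdpos : 0 < d := by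
    rcases Nat.eq_zero_or_pos d with h0 | h0
    · subst h0
      exact absurd (hBC (show par w = 0 by simp [par])) hw
    · exact h0
  have hwodd : par w ≠ 0 := fun h0 => hw (hBC h0)
  have hN : ¬ (Set.range (fun i : Fin d => flp w i) ⊆ L) := by
    intro hsub
    have h1 : (Set.range (fun i : Fin d => flp w i)).ncard = d := by
      rw [← Set.image_univ, Set.ncard_image_of_injective _ (fun i j hij => flp_inj hij),
        Set.ncard_univ, Nat.card_eq_fintype_card, Fintype.card_fin]
    have h2 := Set.ncard_le_ncard hsub hLfin
    omega
  obtain ⟨u, hur, huL⟩ := Set.not_subset.1 hN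
  obtain ⟨i, rfl⟩ := hur
  refine ⟨flp w i, w, ?_, huL, hw, ?_, ?_⟩
  · apply hBC
    show par (flp w i) = 0
    rw [par_flp]
    rcases zmod2_cases (par w) with h | h
    · exact absurd h hwodd
    · rw [h]; decide
  · exact ((adj_iff.2 ⟨i, rfl⟩ : (hypercube d).Adj w (flp w i))).symm
  · intro w' hadj hsc
    obtain ⟨h1, h2, r⟩ := hsc
    have noadj : ∀ p q : ↥(Cᶜ), ¬ ((hypercube d).induce Cᶜ).Adj p q := by
      rintro ⟨p, hp⟩ ⟨q, hq⟩ hadj2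
      have hadj' : (hypercube d).Adj p q := hadj2
      have hp' : par p ≠ 0 := fun h0 => hp (hBC h0)
      have hq' : par q ≠ 0 := fun h0 => hq (hBC h0)
      have hpq := adj_par hadj'
      rcases zmod2_cases (par p) with h3 | h3
      · exact hp' h3
      rcases zmod2_cases (par q) with h4 | h4
      · exact hq' h4
      rw [h3, h4] at hpq
      exact absurd hpq (by decide)
    have heq := reach_eq_of_no_adj noadj r
    exact (congrArg Subtype.val heq).symm

lemma ncard_univ_vt : (Set.univ : Set (Vt d)).ncard = 2 ^ d := by
  rw [Set.ncard_univ, Nat.card_eq_fintype_card, card_univ_vt]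

lemma blocked {B : Set (Vt d)} {ℓ : ℕ} (hd : d ≤ ℓ)
    (h : IsLeakyPsdForcingSet (hypercube d) ℓ B) : B = Set.univ := by
  by_contra hne
  obtain ⟨v, hv⟩ := (Set.ne_univ_iff_exists_notMem B).1 hne
  set L : Set (Vt d) := Set.range (fun i : Fin d => flp v i) with hL
  have hLcard : L.ncard = d := by
    rw [hL, ← Set.image_univ, Set.ncard_image_of_injective _ (fun i j hij => flp_inj hij),
      Set.ncard_univ, Nat.card_eq_fintype_card, Fintype.card_fin]
  have hder := h L (Set.toFinite L) (by rw [hLcard]; exact hd)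
  have hinv : ∀ C, PsdDeriv (hypercube d) L B C → v ∉ C := by
    intro C hC
    induction hC with
    | refl => exact hv
    | @step C' u w hprev hf ih =>
      intro hvC
      rcases Set.mem_insert_iff.1 hvC with hvw | hvC'
      · obtain ⟨huC, huL, hwB, hadj, -⟩ := hf
        apply huL
        rw [hL]
        have hadj' : (hypercube d).Adj v u := by
          rw [hvw]
          exact hadj.symm
        obtain ⟨j, hj⟩ := adj_iff.1 hadj'
        exact ⟨j, hj.symm⟩
      · exact ih hvC'
  exact hinv Set.univ hder (Set.mem_univ v)

end LeakyAux

/-- leaky psd forcing numbers of the hypercube `Q_d`. -/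
theorem leakyPsdNum_hypercube (d : ℕ) :
    (∀ ℓ : ℕ, ℓ ≤ d - 1 → leakyPsdNum (hypercube d) ℓ = 2 ^ (d - 1)) ∧
      ∀ ℓ : ℕ, d ≤ ℓ → ℓ ≤ 2 ^ d → leakyPsdNum (hypercube d) ℓ = 2 ^ d := by
  constructor
  · intro ℓ hl
    rw [leakyPsdNum]
    have hmem : 2 ^ (d - 1) ∈
        {k | ∃ B : Set (Fin d → Bool), B.ncard = k ∧ IsLeakyPsdForcingSet (hypercube d) ℓ B} :=
      ⟨LeakyAux.evens d, LeakyAux.ncard_evens, LeakyAux.evens_forcing hl⟩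
    apply le_antisymm
    · exact Nat.sInf_le hmem
    · refine le_csInf ⟨_, hmem⟩ ?_
      rintro k ⟨B, rfl, hB⟩
      exact LeakyAux.forcing_lower hB
  · intro ℓ hl _
    rw [leakyPsdNum]
    have hmem : 2 ^ d ∈
        {k | ∃ B : Set (Fin d → Bool), B.ncard = k ∧ IsLeakyPsdForcingSet (hypercube d) ℓ B} :=
      ⟨Set.univ, LeakyAux.ncard_univ_vt, fun L _ _ => PsdDeriv.refl _⟩
    apply le_antisymm
    · exact Nat.sInf_le hmem
    · refine le_csInf ⟨_, hmem⟩ ?_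
      rintro k ⟨B, rfl, hB⟩
      rw [LeakyAux.blocked hl hB, LeakyAux.ncard_univ_vt]
end

section
/- Let Wₙ denote the wheel graph on n+1 vertices (an n-cycle plus a hub adjacent to all cycle vertices) with n ≥ 4. Then Z⁺₍₂₎(Wₙ) = ⌈n/2⌉ + 1. -/
open SimpleGraph Set

variable {V : Type*}

/-- The wheel graph `Wₙ` on `n + 1` vertices: an `n`-cycle on the `some`
vertices together with a hub `none` adjacent to all cycle vertices. -/
def wheelGraph (n : ℕ) : SimpleGraph (Option (Fin n)) :=
  SimpleGraph.fromRel fun x y =>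
    (x = none ∧ y ≠ none) ∨
      ∃ a b : Fin n, x = some a ∧ y = some b ∧ (cycleGraph n).Adj a b

/-! ### auxiliary lemmas -/

lemma sameComp_of_adj_s19 {G : SimpleGraph V} {C : Set V} {w w' : V}
    (h1 : w ∉ C) (h2 : w' ∉ C) (h : G.Adj w w') : SameComp G C w w' :=
  ⟨h1, h2, SimpleGraph.Adj.reachable (by simpa using h)⟩

lemma sameComp_eq_of_isolated {G : SimpleGraph V} {C : Set V} {w w' : V}
    (hiso : ∀ x, G.Adj w x → x ∈ C) (h : SameComp G C w w') : w' = w := by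
  obtain ⟨hw, hw', r⟩ := h
  have key : ∀ (x y : ↥(Cᶜ)), (G.induce Cᶜ).Reachable x y → (x : V) = w → (y : V) = w := by
    intro x y r' hx
    obtain ⟨p⟩ := r'
    induction p with
    | nil => exact hx
    | cons hadj p ih =>
      exfalso
      rename_i a b c
      have hGadj : G.Adj (a : V) (b : V) := hadj
      rw [hx] at hGadj
      exact b.2 (hiso _ hGadj)
  exact key _ _ r rfl

lemma psdDeriv_univ [Fintype V] {G : SimpleGraph V} {L B : Set V}
    (h : ∀ C : Set V, B ⊆ C → C ≠ univ → ∃ u w, PsdForce G L C u w) :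
    PsdDeriv G L B univ := by
  suffices H : ∀ (k : ℕ) (C : Set V), B ⊆ C → PsdDeriv G L B C → Cᶜ.ncard ≤ k →
      PsdDeriv G L B univ from H Bᶜ.ncard B subset_rfl (PsdDeriv.refl B) le_rfl
  intro k
  induction k with
  | zero =>
    intro C hBC hD hc
    have : Cᶜ = ∅ := by
      rw [← Set.ncard_eq_zero (toFinite _)]; omega
    rw [Set.compl_empty_iff] at this
    exact this ▸ hD
  | succ k ih =>
    intro C hBC hD hc
    by_cases hC : C = univ
    · exact hC ▸ hD
    · obtain ⟨u, w, hf⟩ := h C hBC hC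
      have hw : w ∉ C := hf.2.2.1
      apply ih (insert w C) (hBC.trans (subset_insert _ _)) (hD.step hf)
      have hcc : (insert w C)ᶜ = Cᶜ \ {w} := by
        ext x; simp [not_or, and_comm]
      rw [hcc, Set.ncard_diff_singleton_of_mem (Set.mem_compl hw)]
      have : 0 < Cᶜ.ncard := by
        rw [Set.ncard_pos (toFinite _)]
        exact ⟨w, hw⟩
      omega
variable {n : ℕ}

lemma wheel_adj_hub (i : Fin n) : (wheelGraph n).Adj none (some i) := by
  rw [wheelGraph, fromRel_adj]
  exact ⟨by simp, Or.inl (Or.inl ⟨rfl, by simp⟩)⟩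

lemma wheel_adj_some {i j : Fin n} (h : (cycleGraph n).Adj i j) :
    (wheelGraph n).Adj (some i) (some j) := by
  rw [wheelGraph, fromRel_adj]
  exact ⟨by simpa using h.ne, Or.inl (Or.inr ⟨i, j, rfl, rfl, h⟩)⟩

lemma wheel_adj_cases {i : Fin n} {y : Option (Fin n)}
    (h : (wheelGraph n).Adj (some i) y) :
    y = none ∨ ∃ j, y = some j ∧ (cycleGraph n).Adj i j := by
  rw [wheelGraph, fromRel_adj] at h
  obtain ⟨-, h | h⟩ := h
  · rcases h with ⟨h, -⟩ | ⟨a, b, ha, hb, hab⟩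
    · exact absurd h (by simp)
    · obtain rfl : a = i := (Option.some_injective _ ha).symm
      exact Or.inr ⟨b, hb, hab⟩
  · rcases h with ⟨hy, -⟩ | ⟨a, b, ha, hb, hab⟩
    · exact Or.inl hy
    · obtain rfl : b = i := (Option.some_injective _ hb).symm
      exact Or.inr ⟨a, ha, hab.symm⟩

lemma wheel_adj_cases' {u : Option (Fin n)} {i : Fin n}
    (h : (wheelGraph n).Adj u (some i)) :
    u = none ∨ ∃ p, u = some p ∧ (cycleGraph n).Adj p i := by
  rcases wheel_adj_cases h.symm with h' | ⟨p, hp, hadj⟩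
  · exact Or.inl h'
  · exact Or.inr ⟨p, hp, hadj.symm⟩

section parity
variable [NeZero n]

lemma fin_succ_even (hn : 2 ≤ n) {i : Fin n} (h : i.val % 2 = 1) : (i + 1).val % 2 = 0 := by
  have hv1 : (1 : Fin n).val = 1 := by
    simp [Fin.val_one', Nat.mod_eq_of_lt (by omega : 1 < n)]
  have hadd : (i + 1).val = (i.val + 1) % n := by rw [Fin.add_def, hv1]
  have hlt := i.isLt
  rcases eq_or_lt_of_le (Nat.succ_le_of_lt hlt) with he | hl
  · rw [hadd, show ↑i + 1 = n by omega, Nat.mod_self]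
  · rw [hadd, Nat.mod_eq_of_lt hl]; omega

lemma fin_pred_even (hn : 2 ≤ n) {i j : Fin n} (h : i.val % 2 = 1) (hij : i = j + 1) :
    j.val % 2 = 0 := by
  have hv1 : (1 : Fin n).val = 1 := by
    simp [Fin.val_one', Nat.mod_eq_of_lt (by omega : 1 < n)]
  have hadd : i.val = (j.val + 1) % n := by rw [hij, Fin.add_def, hv1]
  have hlt := j.isLt
  rcases eq_or_lt_of_le (Nat.succ_le_of_lt hlt) with he | hl
  · rw [hadd, show ↑j + 1 = n by omega, Nat.mod_self] at h; omega
  · rw [hadd, Nat.mod_eq_of_lt hl] at h; omega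
end parity
section FinLemmas
variable {n : ℕ} [NeZero n]

lemma fin_one_ne_zero (hn : 2 ≤ n) : (1 : Fin n) ≠ 0 := by
  simp [Fin.ext_iff, Fin.val_one', Nat.mod_eq_of_lt (by omega : 1 < n)]

lemma fin_succ_ne (hn : 2 ≤ n) (i : Fin n) : i + 1 ≠ i := by
  intro h
  have : i + 1 = i + 0 := by rw [h, add_zero]
  exact fin_one_ne_zero hn (add_left_cancel this)

lemma fin_pred_ne (hn : 2 ≤ n) (i : Fin n) : i - 1 ≠ i := by
  intro h
  exact fin_one_ne_zero hn (sub_eq_self.mp h)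

lemma cyc_adj_iff (hn : 2 ≤ n) {i j : Fin n} :
    (cycleGraph n).Adj i j ↔ i = j + 1 ∨ j = i + 1 := by
  have hv1 : (1 : Fin n).val = 1 := by
    simp [Fin.val_one', Nat.mod_eq_of_lt (by omega : 1 < n)]
  rw [cycleGraph_adj']
  constructor
  · rintro (h | h)
    · left
      have : i - j = 1 := Fin.ext (by rw [h, hv1])
      rw [← this]; exact (add_sub_cancel j i).symm
    · right
      have : j - i = 1 := Fin.ext (by rw [h, hv1])
      rw [← this]; exact (add_sub_cancel i j).symm
  · rintro (rfl | rfl)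
    · left; rw [add_sub_cancel_left, hv1]
    · right; rw [add_sub_cancel_left, hv1]
end FinLemmas

section Main
variable {n : ℕ}

/-- Key invariant lemma: if `A` is a set of cycle vertices, disjoint from `B`, each of
whose members has a cycle-neighbor inside `A`, and such that any cycle-neighbor outside
`A` is a leak, then `B` can never force all of `A`. -/
lemma wheel_blocked [NeZero n] (hn : 4 ≤ n) (A : Set (Fin n)) (L B : Set (Option (Fin n)))
    (h1 : ∀ i ∈ A, some i ∉ B)
    (h2 : ∀ i ∈ A, i + 1 ∈ A ∨ i - 1 ∈ A)
    (h3 : ∀ i ∈ A, (i + 1 ∉ A → some (i + 1) ∈ L) ∧ (i - 1 ∉ A → some (i - 1) ∈ L))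
    (h4 : A.Nonempty) :
    ¬ PsdDeriv (wheelGraph n) L B Set.univ := by
  have hn2 : 2 ≤ n := by omega
  intro hD
  have key : ∀ C, PsdDeriv (wheelGraph n) L B C → ∀ i ∈ A, some i ∉ C := by
    intro C hC
    induction hC with
    | refl => exact h1
    | @step C' u w hD' hf ih =>
      intro i hi hmem
      rcases Set.mem_insert_iff.mp hmem with hwi | hiC
      swap
      · exact ih i hi hiC
      obtain ⟨huC, huL, hwC, hadj, huniq⟩ := hf
      subst hwi
      rcases wheel_adj_cases' hadj with rfl | ⟨p, rfl, hpadj⟩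
      · -- hub forcing: blocked by a neighbor of i inside A
        rcases h2 i hi with hA | hA
        · have hne := huniq (some (i + 1)) (wheel_adj_hub _)
            (sameComp_of_adj_s19 hwC (ih _ hA)
              (wheel_adj_some ((cyc_adj_iff hn2).mpr (Or.inr rfl))))
          exact fin_succ_ne hn2 i (Option.some_injective _ hne)
        · have hne := huniq (some (i - 1)) (wheel_adj_hub _)
            (sameComp_of_adj_s19 hwC (ih _ hA)
              (wheel_adj_some ((cyc_adj_iff hn2).mpr (Or.inl (sub_add_cancel i 1).symm))))
          exact fin_pred_ne hn2 i (Option.some_injective _ hne)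
      · -- cycle-neighbor forcing: either inside A (not blue) or a leak
        rcases (cyc_adj_iff hn2).mp hpadj with hp | hp
        · -- p = i + 1
          subst hp
          by_cases hA : i + 1 ∈ A
          · exact ih _ hA huC
          · exact huL ((h3 i hi).1 hA)
        · -- i = p + 1, i.e. p = i - 1
          obtain rfl : p = i - 1 := by rw [hp, add_sub_cancel_right]
          by_cases hA : i - 1 ∈ A
          · exact ih _ hA huC
          · exact huL ((h3 i hi).2 hA)
  obtain ⟨j, hj⟩ := h4
  exact key univ hD j hj (mem_univ _)

open Fin.NatCast Fin.CommRing in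
lemma lower_blocked_pair [NeZero n] (hn : 4 ≤ n) (B : Set (Option (Fin n))) (j : Fin n)
    (hj : some j ∉ B) (hj1 : some (j + 1) ∉ B) :
    ¬ IsLeakyPsdForcingSet (wheelGraph n) 2 B := by
  classical
  intro hforce
  by_cases hBc : ∀ i : Fin n, some i ∉ B
  · exact wheel_blocked hn univ ∅ B (fun i _ => hBc i)
      (fun i _ => Or.inl (mem_univ _))
      (fun i _ => ⟨fun h => absurd (mem_univ _) h, fun h => absurd (mem_univ _) h⟩)
      ⟨j, mem_univ _⟩ (hforce ∅ finite_empty (by simp))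
  push_neg at hBc
  obtain ⟨b0, hb0⟩ := hBc
  have hR : ∃ t : ℕ, some (j + 1 + (t : Fin n)) ∈ B :=
    ⟨(b0 - (j + 1)).val, by rwa [Fin.cast_val_eq_self, add_sub_cancel]⟩
  have hL : ∃ t : ℕ, some (j - (t : Fin n)) ∈ B :=
    ⟨(j - b0).val, by rwa [Fin.cast_val_eq_self, sub_sub_cancel]⟩
  set qR := Nat.find hR with hqRdef
  set qL := Nat.find hL with hqLdef
  have hqR0 : 0 < qR := by
    rcases Nat.eq_zero_or_pos qR with h0 | h
    · have := Nat.find_spec hR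
      rw [← hqRdef, h0] at this
      simp only [Nat.cast_zero, add_zero] at this
      exact absurd this hj1
    · exact h
  have hqL0 : 0 < qL := by
    rcases Nat.eq_zero_or_pos qL with h0 | h
    · have := Nat.find_spec hL
      rw [← hqLdef, h0] at this
      simp only [Nat.cast_zero, sub_zero] at this
      exact absurd this hj
    · exact h
  set A : Set (Fin n) := {i | (∃ t : ℕ, t < qR ∧ i = j + 1 + (t : Fin n)) ∨
      (∃ t : ℕ, t < qL ∧ i = j - (t : Fin n))} with hAdef
  have hmemF : ∀ t : ℕ, t < qR → j + 1 + (t : Fin n) ∈ A := fun t ht => Or.inl ⟨t, ht, rfl⟩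
  have hmemB : ∀ t : ℕ, t < qL → j - (t : Fin n) ∈ A := fun t ht => Or.inr ⟨t, ht, rfl⟩
  have hjA : j ∈ A := by have := hmemB 0 hqL0; simpa using this
  have hj1A : j + 1 ∈ A := by have := hmemF 0 hqR0; simpa using this
  set L : Set (Option (Fin n)) :=
    {some (j - (qL : Fin n)), some (j + 1 + (qR : Fin n))} with hLdef
  have h1 : ∀ i ∈ A, some i ∉ B := by
    rintro i (⟨t, ht, rfl⟩ | ⟨t, ht, rfl⟩)
    · exact Nat.find_min hR ht
    · exact Nat.find_min hL ht
  have h2 : ∀ i ∈ A, i + 1 ∈ A ∨ i - 1 ∈ A := by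
    rintro i (⟨t, ht, rfl⟩ | ⟨t, ht, rfl⟩)
    · right
      cases t with
      | zero => simpa using hjA
      | succ s =>
        rw [show j + 1 + ((s + 1 : ℕ) : Fin n) - 1 = j + 1 + (s : Fin n) by push_cast; ring]
        exact hmemF s (by omega)
    · left
      cases t with
      | zero => simpa using hj1A
      | succ s =>
        rw [show j - ((s + 1 : ℕ) : Fin n) + 1 = j - (s : Fin n) by push_cast; ring]
        exact hmemB s (by omega)
  have h3 : ∀ i ∈ A, (i + 1 ∉ A → some (i + 1) ∈ L) ∧ (i - 1 ∉ A → some (i - 1) ∈ L) := by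
    rintro i (⟨t, ht, rfl⟩ | ⟨t, ht, rfl⟩)
    · constructor
      · intro hni
        have hq : t + 1 = qR := by
          rcases Nat.lt_or_ge (t + 1) qR with h | h
          · exact absurd (by
              rw [show j + 1 + (t : Fin n) + 1 = j + 1 + ((t + 1 : ℕ) : Fin n) by
                push_cast; ring]
              exact hmemF _ h) hni
          · omega
        simp only [hLdef, Set.mem_insert_iff, Set.mem_singleton_iff]
        right
        rw [← hq]; push_cast; ring_nf
      · intro hni
        exfalso; apply hni
        cases t with
        | zero => simpa using hjA
        | succ s =>
          rw [show j + 1 + ((s + 1 : ℕ) : Fin n) - 1 = j + 1 + (s : Fin n) by push_cast; ring]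
          exact hmemF s (by omega)
    · constructor
      · intro hni
        exfalso; apply hni
        cases t with
        | zero => simpa using hj1A
        | succ s =>
          rw [show j - ((s + 1 : ℕ) : Fin n) + 1 = j - (s : Fin n) by push_cast; ring]
          exact hmemB s (by omega)
      · intro hni
        have hq : t + 1 = qL := by
          rcases Nat.lt_or_ge (t + 1) qL with h | h
          · exact absurd (by
              rw [show j - (t : Fin n) - 1 = j - ((t + 1 : ℕ) : Fin n) by push_cast; ring]
              exact hmemB _ h) hni
          · omega
        simp only [hLdef, Set.mem_insert_iff, Set.mem_singleton_iff]
        left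
        rw [← hq]; push_cast; ring_nf
  have hL2 : L.ncard ≤ 2 :=
    (Set.ncard_insert_le _ _).trans (by simp [Set.ncard_singleton])
  exact wheel_blocked hn A L B h1 h2 h3 ⟨j, hjA⟩ (hforce L (toFinite _) hL2)


lemma wheel_lower [NeZero n] (hn : 4 ≤ n) (B : Set (Option (Fin n)))
    (hcard : B.ncard ≤ (n + 1) / 2) (hforce : IsLeakyPsdForcingSet (wheelGraph n) 2 B) :
    False := by
  have hn2 : 2 ≤ n := by omega
  by_cases hpair : ∃ j : Fin n, some j ∉ B ∧ some (j + 1) ∉ B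
  · obtain ⟨j, hj, hj1⟩ := hpair
    exact lower_blocked_pair hn B j hj hj1 hforce
  push_neg at hpair
  set Bc : Set (Fin n) := {i | some i ∈ B} with hBcdef
  have hpair' : ∀ i : Fin n, i ∉ Bc → i + 1 ∈ Bc := fun i hi => hpair i hi
  have hs : some '' Bc ⊆ B := by rintro _ ⟨i, hi, rfl⟩; exact hi
  have hkB : Bc.ncard ≤ B.ncard := by
    rw [← Set.ncard_image_of_injective Bc (Option.some_injective (Fin n))]
    exact Set.ncard_le_ncard hs (toFinite _)
  have hinj : Function.Injective (fun i : Fin n => i + 1) := add_left_injective 1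
  have hcompl : Bc.ncard + Bcᶜ.ncard = n := by
    rw [Set.ncard_add_ncard_compl]
    simp [Nat.card_eq_fintype_card]
  have himg : (fun i : Fin n => i + 1) '' Bcᶜ ⊆ Bc := by
    rintro _ ⟨i, hi, rfl⟩; exact hpair' i hi
  have hcount : Bcᶜ.ncard ≤ Bc.ncard := by
    rw [← Set.ncard_image_of_injective Bcᶜ hinj]
    exact Set.ncard_le_ncard himg (toFinite _)
  have hBeq : some '' Bc = B := by
    refine Set.eq_of_subset_of_ncard_le hs ?_ (toFinite _)
    rw [Set.ncard_image_of_injective Bc (Option.some_injective (Fin n))]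
    omega
  have hnone : none ∉ B := by
    rw [← hBeq]; rintro ⟨i, -, h⟩; exact absurd h (by simp)
  have hnotriple : ∀ p : Fin n, p ∈ Bc → p + 1 ∈ Bc → p + 1 + 1 ∈ Bc → False := by
    intro p hp hp1 hp2
    have hne : p + 1 ≠ p + 1 + 1 := fun h => (fin_succ_ne hn2 (p + 1)) h.symm
    have hsub : ({p + 1, p + 1 + 1} : Set (Fin n)) ⊆ Bc := by
      intro x hx
      rcases Set.mem_insert_iff.mp hx with rfl | hx
      · exact hp1
      · rw [Set.mem_singleton_iff] at hx; exact hx ▸ hp2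
    have himg2 : (fun i : Fin n => i + 1) '' Bcᶜ ⊆ Bc \ {p + 1, p + 1 + 1} := by
      rintro _ ⟨i, hi, rfl⟩
      refine ⟨hpair' i hi, ?_⟩
      simp only [Set.mem_insert_iff, Set.mem_singleton_iff, not_or]
      constructor
      · intro h
        exact hi (by rw [show i = p from add_right_cancel h]; exact hp)
      · intro h
        exact hi (by rw [show i = p + 1 from add_right_cancel h]; exact hp1)
    have hcount2 : Bcᶜ.ncard ≤ Bc.ncard - 2 := by
      rw [← Set.ncard_image_of_injective Bcᶜ hinj]
      refine (Set.ncard_le_ncard himg2 (toFinite _)).trans ?_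
      rw [Set.ncard_diff hsub (toFinite _), Set.ncard_pair hne]
    have h2le : 2 ≤ Bc.ncard := by
      have h' := Set.ncard_le_ncard hsub (toFinite _)
      rwa [Set.ncard_pair hne] at h'
    omega
  have hD := hforce ∅ finite_empty (by simp)
  have key : ∀ C, PsdDeriv (wheelGraph n) ∅ B C → C = B := by
    intro C hC
    induction hC with
    | refl => rfl
    | @step C' u w hD' hf ih =>
      subst ih
      exfalso
      obtain ⟨huC, -, hwB, hadj, huniq⟩ := hf
      obtain ⟨p, hpBc, rfl⟩ : ∃ p, p ∈ Bc ∧ u = some p := by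
        rw [← hBeq] at huC
        obtain ⟨p, hp, rfl⟩ := huC
        exact ⟨p, hp, rfl⟩
      rcases wheel_adj_cases hadj with rfl | ⟨i, rfl, hpi⟩
      · have hq : ∃ q : Fin n, q ∉ Bc ∧ (cycleGraph n).Adj p q := by
          by_cases h1 : p + 1 ∈ Bc
          · by_cases h2 : p - 1 ∈ Bc
            · refine (hnotriple (p - 1) h2 ?_ ?_).elim
              · rw [sub_add_cancel]; exact hpBc
              · rw [sub_add_cancel]; exact h1
            · exact ⟨p - 1, h2, (cyc_adj_iff hn2).mpr (Or.inl (sub_add_cancel p 1).symm)⟩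
          · exact ⟨p + 1, h1, (cyc_adj_iff hn2).mpr (Or.inr rfl)⟩
        obtain ⟨q, hq, hadjq⟩ := hq
        have := huniq (some q) (wheel_adj_some hadjq)
          (sameComp_of_adj_s19 hwB hq (wheel_adj_hub q))
        exact absurd this (by simp)
      · have := huniq none ((wheel_adj_hub p).symm)
          (sameComp_of_adj_s19 hwB hnone ((wheel_adj_hub i).symm))
        exact absurd this (by simp)
  have huB : (univ : Set (Option (Fin n))) = B := key univ hD
  exact hnone (huB ▸ mem_univ none)


lemma evens_card (n : ℕ) : {i : Fin n | i.val % 2 = 0}.ncard = (n + 1) / 2 := by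
  classical
  rw [show {i : Fin n | i.val % 2 = 0} =
      ↑(Finset.univ.filter (fun i : Fin n => i.val % 2 = 0)) by ext x; simp]
  rw [Set.ncard_coe_finset, Finset.card_filter]
  rw [Fin.sum_univ_eq_sum_range (fun i => if i % 2 = 0 then 1 else 0)]
  induction n with
  | zero => simp
  | succ m ih =>
    rw [Finset.sum_range_succ, ih]
    rcases Nat.even_or_odd m with h | h
    · have h0 := Nat.even_iff.mp h
      rw [if_pos h0]
      omega
    · have h1 := Nat.odd_iff.mp h
      rw [if_neg (by omega : ¬ m % 2 = 0)]
      omega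

open Fin.NatCast in
lemma fin_two_ne_zero [NeZero n] (hn : 4 ≤ n) : (2 : Fin n) ≠ 0 := by
  have h2 : ((2 : ℕ) : Fin n) ≠ 0 := by
    rw [Ne, Fin.natCast_eq_zero]
    intro h
    exact absurd (Nat.le_of_dvd (by norm_num) h) (by omega)
  simpa using h2

open Fin.CommRing in
lemma wheel_upper [NeZero n] (hn : 4 ≤ n) :
    IsLeakyPsdForcingSet (wheelGraph n) 2
      (insert none (some '' {i : Fin n | i.val % 2 = 0})) := by
  have hn2 : 2 ≤ n := by omega
  intro L hLf hL2
  set B : Set (Option (Fin n)) := insert none (some '' {i : Fin n | i.val % 2 = 0}) with hBdef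
  apply psdDeriv_univ
  intro C hBC hCu
  obtain ⟨v, hv⟩ : ∃ v, v ∉ C := by
    by_contra h
    push_neg at h
    exact hCu (Set.eq_univ_of_forall h)
  obtain ⟨i, rfl, hodd⟩ : ∃ i : Fin n, v = some i ∧ i.val % 2 = 1 := by
    match v with
    | none => exact absurd (hBC (Set.mem_insert _ _)) hv
    | some i =>
      refine ⟨i, rfl, ?_⟩
      rcases Nat.even_or_odd i.val with h | h
      · exact absurd (hBC (Set.mem_insert_iff.mpr (Or.inr ⟨i, Nat.even_iff.mp h, rfl⟩))) hv
      · exact Nat.odd_iff.mp h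
  -- all neighbors of `some i` are in B, hence in C
  have hnb : ∀ x, (wheelGraph n).Adj (some i) x → x ∈ C := by
    intro x hx
    rcases wheel_adj_cases hx with rfl | ⟨q, rfl, hadj⟩
    · exact hBC (Set.mem_insert _ _)
    · apply hBC
      refine Set.mem_insert_iff.mpr (Or.inr ⟨q, ?_, rfl⟩)
      rcases (cyc_adj_iff hn2).mp hadj with h | h
      · exact fin_pred_even hn2 hodd h
      · rw [h]; exact fin_succ_even hn2 hodd
  -- pick a non-leak blue neighbor
  have hne1 : some (i + 1) ≠ some (i - 1) := by
    intro h
    have h' : i + 1 = i - 1 := Option.some_injective _ h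
    have : (2 : Fin n) = 0 := by
      have := congrArg (fun x => x - (i - 1)) h'
      simpa [show i + 1 - (i - 1) = 2 by ring] using this
    exact fin_two_ne_zero hn this
  have hnsub : ¬ ({none, some (i + 1), some (i - 1)} : Set (Option (Fin n))) ⊆ L := by
    intro hsub
    have h3 : ({none, some (i + 1), some (i - 1)} : Set (Option (Fin n))).ncard = 3 := by
      rw [Set.ncard_insert_of_notMem (by simp) (toFinite _), Set.ncard_pair hne1]
    have := Set.ncard_le_ncard hsub hLf
    omega
  obtain ⟨u, humem, huL⟩ : ∃ u, u ∈ ({none, some (i + 1), some (i - 1)} :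
      Set (Option (Fin n))) ∧ u ∉ L := by
    by_contra h
    push_neg at h
    exact hnsub h
  have huB : u ∈ B := by
    rcases humem with rfl | humem
    · exact Set.mem_insert _ _
    rcases humem with rfl | humem
    · exact Set.mem_insert_iff.mpr (Or.inr ⟨i + 1, fin_succ_even hn2 hodd, rfl⟩)
    rw [Set.mem_singleton_iff] at humem
    subst humem
    exact Set.mem_insert_iff.mpr
      (Or.inr ⟨i - 1, fin_pred_even hn2 hodd (sub_add_cancel i 1).symm, rfl⟩)
  have huadj : (wheelGraph n).Adj u (some i) := by
    rcases humem with rfl | humem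
    · exact wheel_adj_hub i
    rcases humem with rfl | humem
    · exact wheel_adj_some ((cyc_adj_iff hn2).mpr (Or.inl rfl))
    rw [Set.mem_singleton_iff] at humem
    subst humem
    exact wheel_adj_some ((cyc_adj_iff hn2).mpr (Or.inr (sub_add_cancel i 1).symm))
  exact ⟨u, some i, hBC huB, huL, hv, huadj,
    fun w' _ hsc => sameComp_eq_of_isolated hnb hsc⟩

lemma card_Bstar [NeZero n] :
    (insert none (some '' {i : Fin n | i.val % 2 = 0})).ncard = (n + 1) / 2 + 1 := by
  rw [Set.ncard_insert_of_notMem (by rintro ⟨i, -, h⟩; exact absurd h (by simp))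
    (toFinite _),
    Set.ncard_image_of_injective _ (Option.some_injective (Fin n)), evens_card]

end Main



/-- for `n ≥ 4`, `Z⁺₍₂₎(Wₙ) = ⌈n/2⌉ + 1`
(in `ℕ`, `⌈n/2⌉ = (n + 1) / 2`). -/
theorem leakyPsdNum_wheel (n : ℕ) (hn : 4 ≤ n) :
    leakyPsdNum (wheelGraph n) 2 = (n + 1) / 2 + 1 := by
  haveI : NeZero n := ⟨by omega⟩
  have hmem : (n + 1) / 2 + 1 ∈ {k | ∃ B : Set (Option (Fin n)),
      B.ncard = k ∧ IsLeakyPsdForcingSet (wheelGraph n) 2 B} :=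
    ⟨_, card_Bstar, wheel_upper hn⟩
  refine le_antisymm (Nat.sInf_le hmem) (le_csInf ⟨_, hmem⟩ ?_)
  rintro k ⟨B, rfl, hf⟩
  by_contra hlt
  push_neg at hlt
  exact wheel_lower hn B (by omega) hf
end
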